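/- arXiv:1805.09732 — 6 statements merged into one kernel-verified Lean document; each statement's English description precedes it below -/
import Mathlib

section
/- Let r ≥ 2 and n ≥ 1 be integers. Any family E_1, …, E_{rn−r+1} of edge sets in an r-partite r-uniform hypergraph, each with fractional matching number at least n, admits a rainbow fractional matching of size n (edges chosen from distinct E_i supporting a fractional matching of total size n). -/
open Finset

/-- A fractional matching on the edge set `E`. -/
def FracMatching {V : Type*} [Fintype V] [DecidableEq V]
    (E : Finset (Finset V)) (f : Finset V → ℝ) : Prop :=
  (∀ e, 0 ≤ f e) ∧ (∀ e, e ∉ E → f e = 0) ∧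
  ∀ v : V, ∑ e ∈ E, (if v ∈ e then f e else 0) ≤ 1

/-!
Choose one edge `σ i ∈ E i` from every family and weights `l` in the standard simplex, and
measure how far the weighted incidence vector `z = ∑ i, l i • 1_{σ i}` exceeds `1/n` by the
potential `∑ v, ((z v - 1/n)⁺)²`. If a global minimiser over all choices has potential `0`, then
`n • l` is a rainbow fractional matching of size `n`. Otherwise, if some weight vanishes, the edge
at that index can be exchanged for one of the same family seeing less overload (the family has
fractional matching number `≥ n`), and shifting weight onto it lowers the potential. If all
weights are positive, every chosen edge sees the same overload, and since each edge meets each of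
the `r` parts once, the heavy vertices (`z v ≥ 1/n`) impose at most `r(n - 1) < rn - r + 1`
conditions on a direction of motion in the simplex fixing them; moving along it keeps the
potential and ends with a vanishing weight or more heavy vertices.
-/

namespace RainbowMatching

section Incidence

variable {V ι : Type*} [DecidableEq V] [Fintype ι]

def incidence (e : Finset V) (v : V) : ℝ := if v ∈ e then 1 else 0

lemma incidence_nonneg (e : Finset V) (v : V) : 0 ≤ incidence e v := by
  unfold incidence; split_ifs <;> norm_num

def weightedIncidence (σ : ι → Finset V) : (ι → ℝ) →ₗ[ℝ] V → ℝ :=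
  Fintype.linearCombination ℝ fun i => incidence (σ i)

lemma weightedIncidence_apply (σ : ι → Finset V) (l : ι → ℝ) (v : V) :
    weightedIncidence σ l v = ∑ i, l i * incidence (σ i) v := by
  simp [weightedIncidence, Fintype.linearCombination_apply, Finset.sum_apply]

lemma weightedIncidence_single [DecidableEq ι] (σ : ι → Finset V) (j : ι) :
    weightedIncidence σ (Pi.single j 1) = incidence (σ j) := by
  simp [weightedIncidence, Fintype.linearCombination_apply_single]

lemma weightedIncidence_dotProduct [Fintype V] (σ : ι → Finset V) (l : ι → ℝ) (w : V → ℝ) :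
    weightedIncidence σ l ⬝ᵥ w = ∑ i, l i * (incidence (σ i) ⬝ᵥ w) := by
  simp [weightedIncidence, Fintype.linearCombination_apply, sum_dotProduct, smul_dotProduct]

lemma weightedIncidence_nonneg (σ : ι → Finset V) {l : ι → ℝ} (hl : ∀ i, 0 ≤ l i) (v : V) :
    0 ≤ weightedIncidence σ l v := by
  rw [weightedIncidence_apply]
  exact sum_nonneg fun i _ => mul_nonneg (hl i) (incidence_nonneg _ _)

lemma weightedIncidence_update_of_eq_zero [DecidableEq ι] (σ : ι → Finset V) {l : ι → ℝ} {j : ι}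
    (hj : l j = 0) (e : Finset V) :
    weightedIncidence (Function.update σ j e) l = weightedIncidence σ l := by
  ext v
  simp only [weightedIncidence_apply]
  refine sum_congr rfl fun i _ => ?_
  rcases eq_or_ne i j with rfl | hij
  · simp [hj]
  · rw [Function.update_of_ne hij]

lemma weightedIncidence_eq_zero_of_pos (σ : ι → Finset V) {l : ι → ℝ} (hl : ∀ i, 0 < l i)
    {v : V} (hv : weightedIncidence σ l v = 0) (γ : ι → ℝ) : weightedIncidence σ γ v = 0 := by
  rw [weightedIncidence_apply] at hv ⊢
  have h := (sum_eq_zero_iff_of_nonneg fun i _ =>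
    mul_nonneg (hl i).le (incidence_nonneg (σ i) v)).1 hv
  refine sum_eq_zero fun i hi => ?_
  rw [(mul_eq_zero.1 (h i hi)).resolve_left (hl i).ne', mul_zero]

lemma sum_weightedIncidence_fiber [Fintype V] {κ : Type*} [DecidableEq κ] (part : V → κ) (q : κ)
    {σ : ι → Finset V} (hσ : ∀ i, #((σ i).filter fun v => part v = q) = 1) (γ : ι → ℝ) :
    ∑ v ∈ univ.filter (fun v => part v = q), weightedIncidence σ γ v = ∑ i, γ i := by
  simp only [weightedIncidence_apply]
  rw [sum_comm]
  refine sum_congr rfl fun i _ => ?_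
  rw [← mul_sum]
  have hfilter :
      univ.filter (fun v => part v = q ∧ v ∈ σ i) = (σ i).filter fun v => part v = q := by
    ext v
    simp [and_comm]
  simp only [incidence, sum_boole, filter_filter, hfilter, hσ i, Nat.cast_one, mul_one]

end Incidence

section Potential

variable {V : Type*}

def overload (a : ℝ) (z : V → ℝ) (v : V) : ℝ := (z v - a)⁺

lemma overload_nonneg (a : ℝ) (z : V → ℝ) (v : V) : 0 ≤ overload a z v := posPart_nonneg _

lemma overload_pos_iff {a : ℝ} {z : V → ℝ} {v : V} : 0 < overload a z v ↔ a < z v := by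
  simp [overload]

lemma overload_eq_zero_of_le {a : ℝ} {z : V → ℝ} {v : V} (h : z v ≤ a) : overload a z v = 0 := by
  simp [overload, h]

lemma overload_eq_of_eq_of_le {a : ℝ} {z z' : V → ℝ} (hheavy : ∀ v, a ≤ z v → z' v = z v)
    (hlight : ∀ v, z v < a → z' v ≤ a) : overload a z' = overload a z := by
  ext v
  rcases le_or_gt a (z v) with h | h
  · simp [overload, hheavy v h]
  · rw [overload_eq_zero_of_le (hlight v h), overload_eq_zero_of_le h.le]

variable [Fintype V]

def potential (a : ℝ) (z : V → ℝ) : ℝ := overload a z ⬝ᵥ overload a z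

lemma potential_nonneg (a : ℝ) (z : V → ℝ) : 0 ≤ potential a z :=
  sum_nonneg fun _ _ => mul_self_nonneg _

lemma potential_eq_zero_iff {a : ℝ} {z : V → ℝ} : potential a z = 0 ↔ ∀ v, z v ≤ a := by
  simp [potential, dotProduct_self_eq_zero, funext_iff, overload]

lemma continuous_potential (a : ℝ) : Continuous (potential a : (V → ℝ) → ℝ) := by
  unfold potential overload dotProduct
  fun_prop

lemma posPart_add_mul_self_le (x d : ℝ) :
    (x + d)⁺ * (x + d)⁺ ≤ x⁺ * x⁺ + 2 * (x⁺ * d) + d * d := by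
  rcases le_total x 0 with hx | hx <;> rcases le_total (x + d) 0 with hxd | hxd <;>
    simp only [posPart_eq_zero.2, posPart_eq_self.2, hx, hxd] <;> nlinarith

lemma potential_add_le (a : ℝ) (z d : V → ℝ) :
    potential a (z + d) ≤ potential a z + 2 * (overload a z ⬝ᵥ d) + d ⬝ᵥ d := by
  simp only [potential, dotProduct, overload, Pi.add_apply, mul_sum, ← sum_add_distrib]
  gcongr with v
  rw [add_sub_right_comm]
  exact posPart_add_mul_self_le _ _

lemma exists_potential_lt {a : ℝ} {z x : V → ℝ} (h : overload a z ⬝ᵥ (x - z) < 0) :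
    ∃ t : ℝ, 0 < t ∧ t ≤ 1 ∧ potential a (z + t • (x - z)) < potential a z := by
  set A := overload a z ⬝ᵥ (x - z)
  set B := (x - z) ⬝ᵥ (x - z)
  have hB : 0 ≤ B := sum_nonneg fun _ _ => mul_self_nonneg _
  have ht : 0 < -A / (B + 1) := div_pos (by linarith) (by linarith)
  set t := min 1 (-A / (B + 1))
  have ht0 : 0 < t := lt_min one_pos ht
  refine ⟨t, ht0, min_le_left _ _, ?_⟩
  have htB : t * (B + 1) ≤ -A := (le_div_iff₀ (by linarith)).1 (min_le_right _ _)
  -- `potential_add_le` bounds the potential at `t` by `potential a z + 2tA + t²B`, and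
  -- `t (B + 1) ≤ -A` makes `2tA + t²B ≤ tA - t² < 0`; the `+ 1` allows `B = 0`.
  have hup := potential_add_le a z (t • (x - z))
  simp only [dotProduct_smul, smul_dotProduct, smul_eq_mul] at hup
  change _ ≤ _ + 2 * (t * A) + t * (t * B) at hup
  have htA : t * A < 0 := mul_neg_of_pos_of_neg ht0 h
  linarith [mul_le_mul_of_nonneg_left htB ht0.le, mul_self_nonneg t]

lemma mul_sum_overload_lt {a : ℝ} {z : V → ℝ} {v₀ : V} (hv₀ : a < z v₀) :
    a * ∑ v, overload a z v < z ⬝ᵥ overload a z := by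
  rw [mul_sum]
  refine sum_lt_sum (fun v _ => ?_) ⟨v₀, mem_univ _, ?_⟩
  · rcases le_or_gt (z v) a with h | h
    · simp [overload_eq_zero_of_le h]
    · exact mul_le_mul_of_nonneg_right h.le (overload_nonneg _ _ _)
  · exact mul_lt_mul_of_pos_right hv₀ (overload_pos_iff.2 hv₀)

end Potential

section Exchange

variable {V ι : Type*} [Fintype V] [DecidableEq V] [Fintype ι]

lemma sum_mul_dotProduct_le_sum {E₀ : Finset (Finset V)} {f : Finset V → ℝ}
    (hf : FracMatching E₀ f) {w : V → ℝ} (hw : ∀ v, 0 ≤ w v) :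
    ∑ e ∈ E₀, f e * (incidence e ⬝ᵥ w) ≤ ∑ v, w v := by
  have hswap : ∑ e ∈ E₀, f e * (incidence e ⬝ᵥ w) =
      ∑ v, (∑ e ∈ E₀, if v ∈ e then f e else 0) * w v := by
    simp only [dotProduct, mul_sum, sum_mul]
    rw [sum_comm]
    refine sum_congr rfl fun v _ => sum_congr rfl fun e _ => ?_
    unfold incidence
    split_ifs <;> ring
  rw [hswap]
  exact sum_le_sum fun v _ => mul_le_of_le_one_left (hw v) (hf.2.2 v)

/-- Double counting against a fractional matching of size `s`: if every edge `e` had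
`z ⬝ᵥ p ≤ incidence e ⬝ᵥ p`, where `p` is the overload, then `s * (z ⬝ᵥ p) ≤ ∑ v, p v`, whereas
`mul_sum_overload_lt` gives the opposite strict inequality. -/
lemma exists_mem_dotProduct_overload_lt {E₀ : Finset (Finset V)} {f : Finset V → ℝ}
    (hf : FracMatching E₀ f) {s : ℝ} (hs : 0 < s) (hsize : s ≤ ∑ e ∈ E₀, f e) {z : V → ℝ}
    {v₀ : V} (hv₀ : s⁻¹ < z v₀) :
    ∃ e ∈ E₀, incidence e ⬝ᵥ overload s⁻¹ z < z ⬝ᵥ overload s⁻¹ z := by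
  by_contra! h
  set p := overload s⁻¹ z
  have hlt : s⁻¹ * ∑ v, p v < z ⬝ᵥ p := mul_sum_overload_lt hv₀
  have hc : 0 ≤ z ⬝ᵥ p :=
    (mul_nonneg (inv_nonneg.2 hs.le) (sum_nonneg fun v _ => overload_nonneg _ _ v)).trans hlt.le
  have hle : (z ⬝ᵥ p) * s ≤ ∑ v, p v :=
    calc (z ⬝ᵥ p) * s ≤ (z ⬝ᵥ p) * ∑ e ∈ E₀, f e := mul_le_mul_of_nonneg_left hsize hc
      _ = ∑ e ∈ E₀, f e * (z ⬝ᵥ p) := by rw [mul_sum]; simp only [mul_comm]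
      _ ≤ ∑ e ∈ E₀, f e * (incidence e ⬝ᵥ p) :=
        sum_le_sum fun e he => mul_le_mul_of_nonneg_left (h e he) (hf.1 e)
      _ ≤ ∑ v, p v := sum_mul_dotProduct_le_sum hf (overload_nonneg _ _)
  rw [inv_mul_lt_iff₀ hs] at hlt
  linarith

variable [DecidableEq ι] {a : ℝ}

lemma exists_potential_lt_of_dotProduct_lt (σ : ι → Finset V) {l : ι → ℝ}
    (hl : l ∈ stdSimplex ℝ ι) {j : ι}
    (h : incidence (σ j) ⬝ᵥ overload a (weightedIncidence σ l) <
      weightedIncidence σ l ⬝ᵥ overload a (weightedIncidence σ l)) :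
    ∃ l' ∈ stdSimplex ℝ ι,
      potential a (weightedIncidence σ l') < potential a (weightedIncidence σ l) := by
  set z := weightedIncidence σ l
  have hdesc : overload a z ⬝ᵥ (incidence (σ j) - z) < 0 := by
    rw [dotProduct_sub, dotProduct_comm, dotProduct_comm _ z]
    linarith
  obtain ⟨t, ht0, ht1, hlt⟩ := exists_potential_lt hdesc
  refine ⟨(1 - t) • l + t • Pi.single j 1,
    convex_stdSimplex ℝ ι hl (single_mem_stdSimplex ℝ j) (by linarith) ht0.le (by ring), ?_⟩
  convert hlt using 2
  rw [map_add, map_smul, map_smul, weightedIncidence_single]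
  module

lemma dotProduct_overload_le_of_isMinOn (σ : ι → Finset V) {l : ι → ℝ}
    (hl : l ∈ stdSimplex ℝ ι)
    (hmin : IsMinOn (fun l => potential a (weightedIncidence σ l)) (stdSimplex ℝ ι) l) (i : ι) :
    weightedIncidence σ l ⬝ᵥ overload a (weightedIncidence σ l) ≤
      incidence (σ i) ⬝ᵥ overload a (weightedIncidence σ l) := by
  by_contra! h
  obtain ⟨l', hl', hlt⟩ := exists_potential_lt_of_dotProduct_lt σ hl h
  exact (isMinOn_iff.1 hmin l' hl').not_gt hlt

lemma dotProduct_overload_eq_of_isMinOn (σ : ι → Finset V) {l : ι → ℝ}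
    (hl : l ∈ stdSimplex ℝ ι)
    (hmin : IsMinOn (fun l => potential a (weightedIncidence σ l)) (stdSimplex ℝ ι) l)
    (hpos : ∀ i, 0 < l i) (i : ι) :
    incidence (σ i) ⬝ᵥ overload a (weightedIncidence σ l) =
      weightedIncidence σ l ⬝ᵥ overload a (weightedIncidence σ l) := by
  set p := overload a (weightedIncidence σ l)
  set c := weightedIncidence σ l ⬝ᵥ p
  have hge := dotProduct_overload_le_of_isMinOn σ hl hmin
  have hzero : ∑ i, l i * (incidence (σ i) ⬝ᵥ p - c) = 0 := by
    simp only [mul_sub, sum_sub_distrib, ← sum_mul, hl.2, one_mul, c,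
      ← weightedIncidence_dotProduct, sub_self]
  have := (sum_eq_zero_iff_of_nonneg fun i _ =>
    mul_nonneg (hpos i).le (sub_nonneg.2 (hge i))).1 hzero i (mem_univ i)
  linarith [(mul_eq_zero.1 this).resolve_left (hpos i).ne']

/-- If some index carries no weight, its edge can be exchanged for one from the same family
that sees less overload; moving weight onto it then lowers the potential. -/
lemma potential_eq_zero_of_forall_le_of_eq_zero {E : ι → Finset (Finset V)} {s : ℝ}
    (hs : 0 < s) {σ : ι → Finset V} (hσ : σ ∈ Fintype.piFinset E) {l : ι → ℝ}
    (hl : l ∈ stdSimplex ℝ ι)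
    (hmin : ∀ σ' ∈ Fintype.piFinset E, ∀ l' ∈ stdSimplex ℝ ι,
      potential s⁻¹ (weightedIncidence σ l) ≤ potential s⁻¹ (weightedIncidence σ' l'))
    {j : ι} (hj : l j = 0) (hE : ∃ f, FracMatching (E j) f ∧ s ≤ ∑ e ∈ E j, f e) :
    potential s⁻¹ (weightedIncidence σ l) = 0 := by
  by_contra hne
  obtain ⟨v, hv⟩ : ∃ v, s⁻¹ < weightedIncidence σ l v := by
    simpa [potential_eq_zero_iff] using hne
  obtain ⟨f, hf, hsize⟩ := hE
  obtain ⟨e, he, hlt⟩ := exists_mem_dotProduct_overload_lt hf hs hsize hv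
  have hσ' : Function.update σ j e ∈ Fintype.piFinset E := by
    rw [Fintype.mem_piFinset] at hσ ⊢
    intro i
    rcases eq_or_ne i j with rfl | hij
    · simpa using he
    · simpa [hij] using hσ i
  have hz := weightedIncidence_update_of_eq_zero σ hj e
  obtain ⟨l', hl', hlt'⟩ := exists_potential_lt_of_dotProduct_lt (Function.update σ j e) hl
    (j := j) (by rwa [hz, Function.update_self])
  rw [hz] at hlt'
  exact (hmin _ hσ' l' hl').not_gt hlt'

end Exchange

lemma exists_tight_step {K : Type*} (s : Finset K) (α β : K → ℝ) (hα : ∀ k ∈ s, 0 < α k)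
    (hβ : ∃ k ∈ s, 0 < β k) :
    ∃ t : ℝ, 0 < t ∧ (∀ k ∈ s, t * β k ≤ α k) ∧ ∃ k ∈ s, t * β k = α k := by
  obtain ⟨k₀, hk₀, hmin⟩ := (s.filter fun k => 0 < β k).exists_min_image (fun k => α k / β k)
    (by obtain ⟨k, hk, hβk⟩ := hβ; exact ⟨k, mem_filter.2 ⟨hk, hβk⟩⟩)
  obtain ⟨hk₀s, hβk₀⟩ := mem_filter.1 hk₀
  have ht : 0 < α k₀ / β k₀ := div_pos (hα k₀ hk₀s) hβk₀
  refine ⟨α k₀ / β k₀, ht, fun k hk => ?_, k₀, hk₀s, div_mul_cancel₀ _ hβk₀.ne'⟩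
  rcases le_or_gt (β k) 0 with hβk | hβk
  · nlinarith [hα k hk]
  · exact (le_div_iff₀ hβk).1 (hmin k (mem_filter.2 ⟨hk, hβk⟩))

lemma exists_ne_zero_forall_mem_eq_zero {ι V : Type*} [Fintype ι]
    (L : (ι → ℝ) →ₗ[ℝ] V → ℝ) (U : Finset V) (hU : #U < Fintype.card ι) :
    ∃ γ ≠ 0, ∀ u ∈ U, L γ u = 0 := by
  let R : (ι → ℝ) →ₗ[ℝ] U → ℝ := LinearMap.funLeft ℝ ℝ Subtype.val ∘ₗ L
  have hker : LinearMap.ker R ≠ ⊥ := LinearMap.ker_ne_bot_of_finrank_lt (by simpa using hU)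
  obtain ⟨γ, hγ, hne⟩ := Submodule.exists_mem_ne_zero_of_ne_bot hker
  exact ⟨γ, hne, fun u hu => congr_fun (LinearMap.mem_ker.1 hγ) ⟨u, hu⟩⟩

section Pinning

variable {V : Type*}

lemma flat_of_le_card_heavy {n : ℕ} (hn : 0 < n) {P : Finset V} {z : V → ℝ} (hz : ∀ v, 0 ≤ z v)
    (hsum : ∑ v ∈ P, z v = 1) (hW : n ≤ #(P.filter fun v => (n : ℝ)⁻¹ ≤ z v)) :
    #(P.filter fun v => (n : ℝ)⁻¹ ≤ z v) = n ∧
      (∀ v ∈ P.filter (fun v => (n : ℝ)⁻¹ ≤ z v), z v = (n : ℝ)⁻¹) ∧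
      ∀ v ∈ P, z v < (n : ℝ)⁻¹ → z v = 0 := by
  set a := (n : ℝ)⁻¹
  set W := P.filter fun v => a ≤ z v
  set L := P.filter fun v => ¬a ≤ z v
  have ha : (n : ℝ) * a = 1 := mul_inv_cancel₀ (by positivity)
  have hmass : ∑ v ∈ W, (z v - a) + #W * a + ∑ v ∈ L, z v = 1 := by
    rw [← hsum, ← sum_filter_add_sum_filter_not P (fun v => a ≤ z v), sum_sub_distrib,
      sum_const, nsmul_eq_mul]
    ring
  have hW' : 0 ≤ ∑ v ∈ W, (z v - a) := sum_nonneg fun v hv => sub_nonneg.2 (mem_filter.1 hv).2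
  have hL : 0 ≤ ∑ v ∈ L, z v := sum_nonneg fun v _ => hz v
  have hWa : 1 ≤ #W * a := by
    rw [← ha]; gcongr
  refine ⟨?_, fun v hv => ?_, fun v hv hlt => ?_⟩
  · have : (#W : ℝ) * a = n * a := by linarith
    exact_mod_cast mul_right_cancel₀ (inv_ne_zero (by positivity)) this
  · have := (sum_eq_zero_iff_of_nonneg fun v hv => sub_nonneg.2 (mem_filter.1 hv).2).1
      (by linarith) v hv
    linarith
  · exact (sum_eq_zero_iff_of_nonneg fun v _ => hz v).1 (by linarith) v
      (mem_filter.2 ⟨hv, not_le.2 hlt⟩)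

/-- A part of total weight `1` has at most `n` vertices of weight `≥ 1/n`. If it has fewer than
`n`, take all of them; if it has exactly `n`, they all weigh `1/n`, the rest of the part weighs
nothing, and the balance `∑ v ∈ P, δ v = 0` pins the value of `δ` at one of them. -/
lemma exists_pinning_subset [DecidableEq V] {n : ℕ} (hn : 0 < n) (P : Finset V) {z : V → ℝ}
    (hz : ∀ v, 0 ≤ z v) (hsum : ∑ v ∈ P, z v = 1) :
    ∃ U : Finset V, #U ≤ n - 1 ∧ (∀ v ∈ P, (n : ℝ)⁻¹ < z v → v ∈ U) ∧
      ∀ δ : V → ℝ, ∑ v ∈ P, δ v = 0 → (∀ v ∈ P, z v = 0 → δ v = 0) →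
        (∀ v ∈ U, δ v = 0) → ∀ v ∈ P, (n : ℝ)⁻¹ ≤ z v → δ v = 0 := by
  set W := P.filter fun v => (n : ℝ)⁻¹ ≤ z v
  by_cases hW : #W < n
  · exact ⟨W, by omega, fun v hv h => mem_filter.2 ⟨hv, h.le⟩,
      fun δ _ _ hU v hv h => hU v (mem_filter.2 ⟨hv, h⟩)⟩
  obtain ⟨hcard, hflat, hzero⟩ := flat_of_le_card_heavy hn hz hsum (not_lt.1 hW)
  obtain ⟨v₀, hv₀⟩ : W.Nonempty := card_pos.1 (by omega)
  refine ⟨W.erase v₀, by rw [card_erase_of_mem hv₀, hcard],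
    fun v hv h => absurd (hflat v (mem_filter.2 ⟨hv, h.le⟩)) h.ne', fun δ hδ hδ0 hU v hv h => ?_⟩
  have hvW : v ∈ W := mem_filter.2 ⟨hv, h⟩
  by_cases hvv : v = v₀
  · subst hvv
    rw [← sum_filter_add_sum_filter_not P (fun v => (n : ℝ)⁻¹ ≤ z v), ← add_sum_erase _ _ hvW,
      sum_eq_zero hU, sum_eq_zero fun u hu => hδ0 u (mem_filter.1 hu).1
        (hzero u (mem_filter.1 hu).1 (not_le.1 (mem_filter.1 hu).2))] at hδ
    linarith
  · exact hU v (mem_erase.2 ⟨hvv, hvW⟩)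

end Pinning

section Walk

variable {V ι : Type*} [Fintype V] [Fintype ι]

noncomputable def heavy (a : ℝ) (z : V → ℝ) : Finset V := univ.filter fun v => a ≤ z v

lemma heavy_ssubset_add {a : ℝ} {z d : V → ℝ} (hd : ∀ v ∈ heavy a z, d v = 0) {v : V}
    (hv : z v < a) (hvd : z v + d v = a) : heavy a z ⊂ heavy a (z + d) := by
  have hsub : heavy a z ⊆ heavy a (z + d) := fun u hu => by
    simpa [heavy, hd u hu] using (mem_filter.1 hu).2
  rw [ssubset_iff_of_subset hsub]
  exact ⟨v, by simp [heavy, hvd], by simpa [heavy] using hv⟩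

variable [DecidableEq V]

/-- The directions `γ` vanishing on the heavy vertices of each part are cut out by at most
`n - 1` equations per part, fewer than there are indices. On such a `γ` every selected edge sees
the same overload, so `γ` is also balanced. -/
lemma exists_balanced_direction {κ : Type*} [Fintype κ] [DecidableEq κ] (part : V → κ)
    {σ : ι → Finset V} (hσ : ∀ i q, #((σ i).filter fun v => part v = q) = 1) {n : ℕ}
    (hn : 0 < n) (hcard : Fintype.card κ * (n - 1) < Fintype.card ι) {l : ι → ℝ}
    (hl : l ∈ stdSimplex ℝ ι) (hlpos : ∀ i, 0 < l i)
    (hkkt : ∀ i, incidence (σ i) ⬝ᵥ overload (n : ℝ)⁻¹ (weightedIncidence σ l) =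
      weightedIncidence σ l ⬝ᵥ overload (n : ℝ)⁻¹ (weightedIncidence σ l))
    (hct : 0 < weightedIncidence σ l ⬝ᵥ overload (n : ℝ)⁻¹ (weightedIncidence σ l)) :
    ∃ γ : ι → ℝ, γ ≠ 0 ∧ ∑ i, γ i = 0 ∧
      ∀ v ∈ heavy (n : ℝ)⁻¹ (weightedIncidence σ l), weightedIncidence σ γ v = 0 := by
  set z := weightedIncidence σ l
  have hfiber (γ : ι → ℝ) (q : κ) :
      ∑ v ∈ univ.filter (fun v => part v = q), weightedIncidence σ γ v = ∑ i, γ i :=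
    sum_weightedIncidence_fiber part q (fun i => hσ i q) γ
  choose U hUcard hUover hUpin using fun q => exists_pinning_subset hn
    (univ.filter fun v => part v = q) (weightedIncidence_nonneg σ hl.1) (by rw [hfiber, hl.2])
  obtain ⟨γ, hγ0, hγU⟩ := exists_ne_zero_forall_mem_eq_zero (weightedIncidence σ)
    (univ.biUnion U) <| calc
      #(univ.biUnion U) ≤ ∑ q, #(U q) := card_biUnion_le
      _ ≤ ∑ _q : κ, (n - 1) := sum_le_sum fun q _ => hUcard q
      _ = Fintype.card κ * (n - 1) := by simp
      _ < Fintype.card ι := hcard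
  have hγU' : ∀ v, (n : ℝ)⁻¹ < z v → weightedIncidence σ γ v = 0 := fun v hv =>
    hγU v (mem_biUnion.2 ⟨part v, mem_univ _, hUover _ v (by simp) hv⟩)
  have hsum : ∑ i, γ i = 0 := by
    have hdot : weightedIncidence σ γ ⬝ᵥ overload (n : ℝ)⁻¹ z = 0 := sum_eq_zero fun v _ => by
      rcases le_or_gt (z v) (n : ℝ)⁻¹ with h | h
      · rw [overload_eq_zero_of_le h, mul_zero]
      · rw [hγU' v h, zero_mul]
    rw [weightedIncidence_dotProduct] at hdot
    simp only [hkkt, ← sum_mul] at hdot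
    exact (mul_eq_zero.1 hdot).resolve_right hct.ne'
  refine ⟨γ, hγ0, hsum, fun v hv => hUpin (part v) (weightedIncidence σ γ) (by rw [hfiber, hsum])
    (fun u _ hu => weightedIncidence_eq_zero_of_pos σ hlpos hu γ)
    (fun u hu => hγU u (mem_biUnion.2 ⟨_, mem_univ _, hu⟩)) v (by simp) (mem_filter.1 hv).2⟩

lemma exists_step {a : ℝ} (σ : ι → Finset V) {l : ι → ℝ} (hl : l ∈ stdSimplex ℝ ι)
    (hlpos : ∀ i, 0 < l i) {γ : ι → ℝ} (hγ0 : γ ≠ 0) (hγsum : ∑ i, γ i = 0)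
    (hγ : ∀ v ∈ heavy a (weightedIncidence σ l), weightedIncidence σ γ v = 0) :
    ∃ l' ∈ stdSimplex ℝ ι,
      overload a (weightedIncidence σ l') = overload a (weightedIncidence σ l) ∧
      ((∃ i, l' i = 0) ∨ heavy a (weightedIncidence σ l) ⊂ heavy a (weightedIncidence σ l')) := by
  set z := weightedIncidence σ l
  set δ := weightedIncidence σ γ
  obtain ⟨i₀, hi₀⟩ : ∃ i, γ i < 0 := by
    by_contra! h
    exact hγ0 (funext fun i => (sum_eq_zero_iff_of_nonneg fun i _ => h i).1 hγsum i (mem_univ i))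
  -- move from `l` along `γ` until a weight vanishes or a light vertex becomes heavy
  let α : ι ⊕ V → ℝ := Sum.elim l fun v => a - z v
  let β : ι ⊕ V → ℝ := Sum.elim (-γ) δ
  obtain ⟨t, ht, hle, k, hk, htight⟩ := exists_tight_step (univ.filter fun k => 0 < α k) α β
    (fun k hk => (mem_filter.1 hk).2) ⟨Sum.inl i₀, by simp [α, hlpos], by simp [β, hi₀]⟩
  have hweight (i : ι) : t * -γ i ≤ l i := by simpa [α, β, hlpos] using hle (Sum.inl i)
  have hvertex (v : V) (hv : z v < a) : t * δ v ≤ a - z v := by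
    simpa [α, β, hv] using hle (Sum.inr v)
  have hz' : weightedIncidence σ (l + t • γ) = z + t • δ := by rw [map_add, map_smul]
  have hfix : ∀ v ∈ heavy a z, (t • δ) v = 0 := fun v hv => by simp [hγ v hv]
  refine ⟨l + t • γ, ⟨fun i => ?_, ?_⟩, ?_, ?_⟩
  · simp only [Pi.add_apply, Pi.smul_apply, smul_eq_mul]
    linarith [hweight i]
  · simp [sum_add_distrib, ← mul_sum, hl.2, hγsum]
  · rw [hz']
    refine overload_eq_of_eq_of_le (fun v hv => ?_) fun v hv => ?_
    · simpa using hfix v (mem_filter.2 ⟨mem_univ v, hv⟩)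
    · simp only [Pi.add_apply, Pi.smul_apply, smul_eq_mul]
      linarith [hvertex v hv]
  rcases k with i | v
  · refine Or.inl ⟨i, ?_⟩
    simp only [β, α, Sum.elim_inl, Pi.neg_apply] at htight
    simp only [Pi.add_apply, Pi.smul_apply, smul_eq_mul]
    linarith
  · have hv : z v < a := by simpa [α] using hk
    refine Or.inr (hz' ▸ heavy_ssubset_add hfix hv ?_)
    simp only [β, α, Sum.elim_inr] at htight
    simp only [Pi.smul_apply, smul_eq_mul]
    linarith

lemma exists_isMinOn_eq_zero [DecidableEq ι] {κ : Type*} [Fintype κ] [DecidableEq κ]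
    (part : V → κ) {σ : ι → Finset V} (hσ : ∀ i q, #((σ i).filter fun v => part v = q) = 1)
    {n : ℕ} (hn : 0 < n) (hcard : Fintype.card κ * (n - 1) < Fintype.card ι) {l : ι → ℝ}
    (hl : l ∈ stdSimplex ℝ ι)
    (hmin : IsMinOn (fun l => potential (n : ℝ)⁻¹ (weightedIncidence σ l)) (stdSimplex ℝ ι) l)
    (hpos : potential (n : ℝ)⁻¹ (weightedIncidence σ l) ≠ 0) :
    ∃ l' ∈ stdSimplex ℝ ι,
      IsMinOn (fun l => potential (n : ℝ)⁻¹ (weightedIncidence σ l)) (stdSimplex ℝ ι) l' ∧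
        ∃ i, l' i = 0 := by
  induction hk : Fintype.card V - #(heavy (n : ℝ)⁻¹ (weightedIncidence σ l))
    using Nat.strong_induction_on generalizing l with
  | _ k ih =>
  by_cases hlpos : ∀ i, 0 < l i
  swap
  · obtain ⟨i, hi⟩ := not_forall.1 hlpos
    exact ⟨l, hl, hmin, i, le_antisymm (not_lt.1 hi) (hl.1 i)⟩
  obtain ⟨v, hv⟩ : ∃ v, (n : ℝ)⁻¹ < weightedIncidence σ l v := by
    simpa [potential_eq_zero_iff] using hpos
  have hct := (mul_nonneg (by positivity) (sum_nonneg fun v _ => overload_nonneg _ _ v)).trans_lt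
    (mul_sum_overload_lt hv)
  obtain ⟨γ, hγ0, hγsum, hγ⟩ := exists_balanced_direction part hσ hn hcard hl hlpos
    (dotProduct_overload_eq_of_isMinOn σ hl hmin hlpos) hct
  obtain ⟨l', hl', hover, hstep⟩ := exists_step σ hl hlpos hγ0 hγsum hγ
  have hpot : potential (n : ℝ)⁻¹ (weightedIncidence σ l') =
      potential (n : ℝ)⁻¹ (weightedIncidence σ l) := by
    simp only [potential, hover]
  have hmin' : IsMinOn (fun l => potential (n : ℝ)⁻¹ (weightedIncidence σ l))
      (stdSimplex ℝ ι) l' :=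
    isMinOn_iff.2 fun x hx => hpot.trans_le (isMinOn_iff.1 hmin x hx)
  rcases hstep with hzero' | hgrow
  · exact ⟨l', hl', hmin', hzero'⟩
  · have := card_lt_card hgrow
    have := card_le_univ (heavy (n : ℝ)⁻¹ (weightedIncidence σ l'))
    exact ih _ (by omega) hl' hmin' (hpot ▸ hpos) rfl

end Walk

lemma exists_rainbow_of_le {V ι : Type*} [Fintype V] [DecidableEq V] [Fintype ι]
    [DecidableEq ι] [Nonempty ι] {E : ι → Finset (Finset V)} {σ : ι → Finset V}
    (hσ : σ ∈ Fintype.piFinset E) {l : ι → ℝ}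
    (hl : l ∈ stdSimplex ℝ ι) {s : ℝ} (hs : 0 < s) (hz : ∀ v, weightedIncidence σ l v ≤ s⁻¹) :
    ∃ (F : Finset (Finset V)) (c : Finset V → ι), Set.InjOn c ↑F ∧ (∀ e ∈ F, e ∈ E (c e)) ∧
      ∃ f, FracMatching F f ∧ ∑ e ∈ F, f e = s := by
  have hinv : ∀ e ∈ univ.image σ, σ (Function.invFun σ e) = e := fun e he =>
    Function.invFun_eq (by simpa using he)
  have hfiber (g : ι → ℝ) : ∑ e ∈ univ.image σ, ∑ i ∈ univ.filter (σ · = e), g i = ∑ i, g i :=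
    sum_fiberwise_of_maps_to (fun i _ => mem_image_of_mem σ (mem_univ i)) g
  refine ⟨univ.image σ, Function.invFun σ,
    fun e he e' he' h => by rw [← hinv e he, ← hinv e' he', h],
    fun e he => by simpa [hinv e he] using Fintype.mem_piFinset.1 hσ (Function.invFun σ e),
    fun e => s * ∑ i ∈ univ.filter (σ · = e), l i, ⟨fun e => ?_, fun e he => ?_, fun v => ?_⟩, ?_⟩
  · exact mul_nonneg hs.le (sum_nonneg fun i _ => hl.1 i)
  · dsimp only
    rw [filter_false_of_mem fun i _ (h : σ i = e) => he (h ▸ mem_image_of_mem σ (mem_univ i)),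
      sum_empty, mul_zero]
  · calc ∑ e ∈ univ.image σ, (if v ∈ e then s * ∑ i ∈ univ.filter (σ · = e), l i else 0)
        = ∑ e ∈ univ.image σ, ∑ i ∈ univ.filter (σ · = e), s * (l i * incidence (σ i) v) := by
          refine sum_congr rfl fun e _ => ?_
          split_ifs with hv
          · rw [mul_sum]
            refine sum_congr rfl fun i hi => ?_
            rw [(mem_filter.1 hi).2]
            simp [incidence, hv]
          · refine (sum_eq_zero fun i hi => ?_).symm
            rw [(mem_filter.1 hi).2]
            simp [incidence, hv]
      _ = s * weightedIncidence σ l v := by rw [hfiber, ← mul_sum, weightedIncidence_apply]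
      _ ≤ s * s⁻¹ := mul_le_mul_of_nonneg_left (hz v) hs.le
      _ = 1 := mul_inv_cancel₀ hs.ne'
  · rw [← mul_sum, hfiber, hl.2, mul_one]

lemma exists_forall_le_of_isCompact {α X : Type*} [TopologicalSpace X] {S : Finset α}
    {K : Set X} (hS : S.Nonempty) (hK : IsCompact K) (hK₀ : K.Nonempty) (g : α → X → ℝ)
    (hg : ∀ s, Continuous (g s)) :
    ∃ s ∈ S, ∃ x ∈ K, ∀ s' ∈ S, ∀ x' ∈ K, g s x ≤ g s' x' := by
  choose x hx hmin using fun s => hK.exists_isMinOn hK₀ (hg s).continuousOn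
  obtain ⟨s, hs, hsmin⟩ := S.exists_min_image (fun s => g s (x s)) hS
  exact ⟨s, hs, x s, hx s, fun s' hs' x' hx' =>
    (hsmin s' hs').trans (isMinOn_iff.1 (hmin s') x' hx')⟩

end RainbowMatching

open RainbowMatching in
theorem rainbow_fracMatching_rpartite_general {V : Type*} [Fintype V] [DecidableEq V]
    (r n : ℕ) (hn : 1 ≤ n) (part : V → Fin r)
    (E : Fin (r * n - r + 1) → Finset (Finset V))
    (hEpart : ∀ i, ∀ e ∈ E i, ∀ p : Fin r, (e.filter fun v => part v = p).card = 1)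
    (hν : ∀ i, ∃ f, FracMatching (E i) f ∧ (n : ℝ) ≤ ∑ e ∈ E i, f e) :
    ∃ (F : Finset (Finset V)) (c : Finset V → Fin (r * n - r + 1)),
      Set.InjOn c ↑F ∧ (∀ e ∈ F, e ∈ E (c e)) ∧
      ∃ f, FracMatching F f ∧ ∑ e ∈ F, f e = (n : ℝ) := by
  have hnR : (0 : ℝ) < n := by exact_mod_cast hn
  have hE : (Fintype.piFinset E).Nonempty := Fintype.piFinset_nonempty.2 fun i => by
    obtain ⟨f, -, hsize⟩ := hν i
    by_contra h
    simp [not_nonempty_iff_eq_empty.1 h] at hsize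
    linarith
  obtain ⟨σ, hσ, l, hl, hmin⟩ := exists_forall_le_of_isCompact hE (isCompact_stdSimplex ℝ _)
    ⟨_, single_mem_stdSimplex ℝ 0⟩ (fun σ l => potential (n : ℝ)⁻¹ (weightedIncidence σ l))
    fun σ => (continuous_potential _).comp (weightedIncidence σ).continuous_of_finiteDimensional
  suffices h : potential (n : ℝ)⁻¹ (weightedIncidence σ l) = 0 from
    exists_rainbow_of_le hσ hl hnR (potential_eq_zero_iff.1 h)
  by_contra hpos
  obtain ⟨l', hl', hmin', j, hj⟩ := exists_isMinOn_eq_zero part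
    (fun i => hEpart i (σ i) (Fintype.mem_piFinset.1 hσ i)) hn
    (by simp only [Fintype.card_fin, Nat.mul_sub_one]; omega) hl
    (isMinOn_iff.2 fun l' hl' => hmin σ hσ l' hl') hpos
  have hle := isMinOn_iff.1 hmin' l hl
  have hzero := potential_eq_zero_of_forall_le_of_eq_zero hnR hσ hl'
    (fun σ' hσ' l'' hl'' => hle.trans (hmin σ' hσ' l'' hl'')) hj (hν j)
  exact hpos (le_antisymm (hzero ▸ hmin σ hσ l' hl') (potential_nonneg _ _))

/-- Any family of `rn - r + 1` edge sets in an `r`-partite hypergraph (with partition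
given by `part : V → Fin r`, every edge meeting each part exactly once), each with
fractional matching number at least `n`, has a rainbow fractional matching of size `n`. -/
theorem rainbow_fracMatching_rpartite {V : Type*} [Fintype V] [DecidableEq V]
    (r n : ℕ) (hr : 2 ≤ r) (hn : 1 ≤ n) (part : V → Fin r)
    (E : Fin (r * n - r + 1) → Finset (Finset V))
    (hEpart : ∀ i, ∀ e ∈ E i, ∀ p : Fin r, (e.filter fun v => part v = p).card = 1)
    (hν : ∀ i, ∃ f, FracMatching (E i) f ∧ (n : ℝ) ≤ ∑ e ∈ E i, f e) :
    ∃ (F : Finset (Finset V)) (c : Finset V → Fin (r * n - r + 1)),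
      Set.InjOn c ↑F ∧ (∀ e ∈ F, e ∈ E (c e)) ∧
      ∃ f, FracMatching F f ∧ ∑ e ∈ F, f e = (n : ℝ) :=
  rainbow_fracMatching_rpartite_general r n hn part E hEpart hν
end

section
/- For a half-integer n = k + 1/2 with k ≥ 1, there exist 2k edge sets E_1, …, E_{2k} in a graph (namely 2k copies of the edge set of the cycle C_{2k+1}), each with fractional matching number exactly n, that admit no rainbow fractional matching of size n. Hence the bound 2n in the rainbow fractional matching theorem for general graphs is tight for half-integers. -/
open Finset

/-- The edge set of the cycle on the vertex set `ZMod m`. -/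
def cycleEdges (m : ℕ) [NeZero m] : Finset (Finset (ZMod m)) :=
  Finset.univ.image fun i : ZMod m => ({i, i + 1} : Finset (ZMod m))

lemma edge_inj (m : ℕ) (hm : 3 ≤ m) [NeZero m] (i j : ZMod m)
    (h : ({i, i+1} : Finset (ZMod m)) = {j, j+1}) : i = j := by
  have h2 : ((2:ℕ) : ZMod m) ≠ 0 := by
    intro h0
    have := Nat.le_of_dvd (by norm_num) ((ZMod.natCast_eq_zero_iff 2 m).mp h0)
    omega
  have hi : i ∈ ({j, j+1} : Finset (ZMod m)) := h ▸ (by simp)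
  have hj : j ∈ ({i, i+1} : Finset (ZMod m)) := h ▸ (by simp)
  simp at hi hj
  rcases hi with hi | hi
  · exact hi
  · rcases hj with hj | hj
    · exact hj.symm
    · exfalso
      apply h2
      have h3 : i = i + 2 := by
        calc i = j + 1 := hi
        _ = (i + 1) + 1 := by rw [hj]
        _ = i + 2 := by ring
      have := left_eq_add.mp h3
      push_cast
      exact this

lemma edge_card2 (m : ℕ) (hm : 3 ≤ m) [NeZero m] (i : ZMod m) :
    ({i, i+1} : Finset (ZMod m)).card = 2 := by
  rw [Finset.card_insert_of_notMem, Finset.card_singleton]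
  simp only [Finset.mem_singleton]
  intro h
  have h1 : ((1:ℕ) : ZMod m) = 0 := by
    have := left_eq_add.mp h
    push_cast
    exact this
  have := Nat.le_of_dvd (by norm_num) ((ZMod.natCast_eq_zero_iff 1 m).mp h1)
  omega

lemma cycleEdges_card (m : ℕ) (hm : 3 ≤ m) [NeZero m] : (cycleEdges m).card = m := by
  rw [cycleEdges, Finset.card_image_of_injective _ (fun a b hab => edge_inj m hm a b hab)]
  simp [ZMod.card]

lemma load_sum {V : Type*} [DecidableEq V] (S : Finset V) (E : Finset (Finset V))
    (f : Finset V → ℝ) :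
    ∑ v ∈ S, ∑ e ∈ E, (if v ∈ e then f e else 0)
      = ∑ e ∈ E, ((e ∩ S).card : ℝ) * f e := by
  rw [Finset.sum_comm]
  refine Finset.sum_congr rfl fun e _ => ?_
  rw [Finset.sum_ite_mem, Finset.sum_const, Finset.inter_comm]
  simp [nsmul_eq_mul]

lemma vertex_deg (m : ℕ) (hm : 3 ≤ m) [NeZero m] (v : ZMod m) :
    ∑ e ∈ cycleEdges m, (if v ∈ e then (1/2 : ℝ) else 0) = 1 := by
  rw [cycleEdges, Finset.sum_image (fun a _ b _ hab => edge_inj m hm a b hab)]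
  have key : ∀ i : ZMod m,
      (v ∈ ({i, i+1} : Finset (ZMod m))) ↔ i ∈ ({v, v-1} : Finset (ZMod m)) := by
    intro i
    simp only [Finset.mem_insert, Finset.mem_singleton]
    constructor
    · rintro (h | h)
      · exact Or.inl h.symm
      · exact Or.inr (by rw [h]; ring)
    · rintro (h | h)
      · exact Or.inl h.symm
      · exact Or.inr (by rw [h]; ring)
  simp_rw [key]
  rw [Finset.sum_ite_mem, Finset.univ_inter, Finset.sum_const]
  have hcard : ({v, v-1} : Finset (ZMod m)).card = 2 := by
    rw [Finset.card_insert_of_notMem, Finset.card_singleton]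
    simp only [Finset.mem_singleton]
    intro h
    have h1 : ((1:ℕ) : ZMod m) = 0 := by
      push_cast
      calc (1 : ZMod m) = v - (v-1) := by ring
      _ = v - v := by rw [← h]
      _ = 0 := by ring
    have := Nat.le_of_dvd (by norm_num) ((ZMod.natCast_eq_zero_iff 1 m).mp h1)
    omega
  rw [hcard]
  norm_num

/-- Tightness for half-integers: for `n = k + 1/2` with `k ≥ 1`, the family of `2k`
copies of the edge set of `C_{2k+1}` has each fractional matching number exactly `n`,
yet admits no rainbow fractional matching of size `n`. -/
theorem rainbow_halfInteger_tight (k : ℕ) (hk : 1 ≤ k) :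
    (∀ _i : Fin (2 * k),
      IsGreatest
        {x : ℝ | ∃ f, FracMatching (cycleEdges (2 * k + 1)) f ∧
          ∑ e ∈ cycleEdges (2 * k + 1), f e = x}
        ((k : ℝ) + 1 / 2)) ∧
    ¬ ∃ (F : Finset (Finset (ZMod (2 * k + 1))))
        (c : Finset (ZMod (2 * k + 1)) → Fin (2 * k)),
        Set.InjOn c ↑F ∧ (∀ e ∈ F, e ∈ cycleEdges (2 * k + 1)) ∧
        ∃ f, FracMatching F f ∧ ∑ e ∈ F, f e = (k : ℝ) + 1 / 2 := by
  have hm : 3 ≤ 2 * k + 1 := by omega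
  constructor
  · intro _i
    constructor
    · -- membership : the all-1/2 fractional matching
      refine ⟨fun e => if e ∈ cycleEdges (2*k+1) then (1/2 : ℝ) else 0, ⟨?_, ?_, ?_⟩, ?_⟩
      · intro e; dsimp only; split <;> norm_num
      · intro e he; simp [he]
      · intro v
        have : ∑ e ∈ cycleEdges (2*k+1),
            (if v ∈ e then (if e ∈ cycleEdges (2*k+1) then (1/2:ℝ) else 0) else 0)
            = ∑ e ∈ cycleEdges (2*k+1), (if v ∈ e then (1/2:ℝ) else 0) :=
          Finset.sum_congr rfl fun e he => by simp [he]
        rw [this, vertex_deg _ hm]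
      · rw [Finset.sum_congr rfl (fun e he => if_pos he), Finset.sum_const,
          cycleEdges_card _ hm]
        ring
    · -- upper bound
      rintro x ⟨f, ⟨hf0, hsupp, hdeg⟩, hx⟩
      have h2 : ∑ v : ZMod (2*k+1), ∑ e ∈ cycleEdges (2*k+1), (if v ∈ e then f e else 0)
          = 2 * x := by
        rw [load_sum]
        have : ∀ e ∈ cycleEdges (2*k+1), ((e ∩ Finset.univ).card : ℝ) * f e = 2 * f e := by
          intro e he
          obtain ⟨i, _, rfl⟩ := Finset.mem_image.mp he
          rw [Finset.inter_univ, edge_card2 _ hm]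
          norm_num
        rw [Finset.sum_congr rfl this, ← Finset.mul_sum, hx]
      have h1 : ∑ v : ZMod (2*k+1), ∑ e ∈ cycleEdges (2*k+1), (if v ∈ e then f e else 0)
          ≤ (2*k+1 : ℝ) := by
        calc _ ≤ ∑ _v : ZMod (2*k+1), (1:ℝ) := Finset.sum_le_sum fun v _ => hdeg v
        _ = (2*k+1 : ℝ) := by simp [ZMod.card]
      rw [h2] at h1
      linarith
  · rintro ⟨F, c, hinj, hF, f, ⟨hf0, hsupp, hdeg⟩, hsum⟩
    -- F has at most 2k edges
    have hFcard : F.card ≤ 2 * k := by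
      have := Finset.card_le_card_of_injOn c (fun _ _ => Finset.mem_univ _) hinj
      simpa using this
    -- find a missing edge {j, j+1}
    have hnsub : ¬ (cycleEdges (2*k+1) ⊆ F) := by
      intro hsub
      have := Finset.card_le_card hsub
      rw [cycleEdges_card _ hm] at this
      omega
    obtain ⟨e₀, he₀E, he₀F⟩ := Finset.not_subset.mp hnsub
    obtain ⟨j, -, hj⟩ := Finset.mem_image.mp he₀E
    -- the vertex cover
    set C : Finset (ZMod (2*k+1)) :=
      (Finset.range k).image (fun u : ℕ => j + ((2*(u+1) : ℕ) : ZMod (2*k+1))) with hC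
    have hCcard : C.card ≤ k := le_trans (Finset.card_image_le) (by simp)
    -- every edge of F meets C
    have hcover : ∀ e ∈ F, 1 ≤ (e ∩ C).card := by
      intro e heF
      obtain ⟨i, -, hi⟩ := Finset.mem_image.mp (hF e heF)
      have hij : i ≠ j := by
        intro h
        apply he₀F
        rw [← hj, ← h, hi]
        exact heF
      set t := (i - j).val with ht
      have ht0 : t ≠ 0 := by
        simp only [ht, Ne, ZMod.val_eq_zero, sub_eq_zero]
        exact hij
      have htlt : t < 2*k+1 := ZMod.val_lt _
      have hi_eq : i = j + ((t : ℕ) : ZMod (2*k+1)) := by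
        have h1 : ((t : ℕ) : ZMod (2*k+1)) = i - j := by
          rw [ht, ZMod.natCast_val, ZMod.cast_id]
        rw [h1]; ring
      rw [Finset.one_le_card]
      rcases Nat.even_or_odd t with ⟨u, hu⟩ | ⟨u, hu⟩
      · -- t = 2u, i itself is in C
        refine ⟨i, Finset.mem_inter.mpr ⟨by rw [← hi]; simp, ?_⟩⟩
        rw [hC, Finset.mem_image]
        refine ⟨u - 1, Finset.mem_range.mpr (by omega), ?_⟩
        have : 2 * ((u-1) + 1) = t := by omega
        rw [this, ← hi_eq]
      · -- t = 2u+1, i+1 is in C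
        refine ⟨i + 1, Finset.mem_inter.mpr ⟨by rw [← hi]; simp, ?_⟩⟩
        rw [hC, Finset.mem_image]
        refine ⟨u, Finset.mem_range.mpr (by omega), ?_⟩
        have h2 : (2 * (u+1) : ℕ) = t + 1 := by omega
        rw [h2, hi_eq]
        push_cast
        ring
    -- conclude
    have hstep1 : ∑ e ∈ F, f e ≤ ∑ e ∈ F, ((e ∩ C).card : ℝ) * f e := by
      refine Finset.sum_le_sum fun e he => ?_
      have h1 : (1 : ℝ) ≤ ((e ∩ C).card : ℝ) := by exact_mod_cast hcover e he
      nlinarith [hf0 e]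
    have hstep2 : ∑ e ∈ F, ((e ∩ C).card : ℝ) * f e ≤ (k : ℝ) := by
      rw [← load_sum]
      calc ∑ v ∈ C, ∑ e ∈ F, (if v ∈ e then f e else 0)
          ≤ ∑ _v ∈ C, (1:ℝ) := Finset.sum_le_sum fun v _ => hdeg v
        _ = (C.card : ℝ) := by simp
        _ ≤ (k : ℝ) := by exact_mod_cast hCcard
    rw [hsum] at hstep1
    linarith
end

section
/- For even n, let C_{2n} have vertices 1,…,2n in cyclic order, let M_odd and M_even be its two perfect matchings, and let M* = {13, 24, 57, 68, …, (2n−3)(2n−1), (2n−2)(2n)}. Then the family consisting of n−1 copies of M_odd, n−1 copies of M_even, and one copy of M* is a family of 2n−1 matchings of size n in a (non-bipartite) graph with no rainbow matching of size n. -/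
open Finset

/-- A matching: a set of pairwise disjoint edges of size 2. -/
def IsMatching {V : Type*} [DecidableEq V] (F : Finset (Finset V)) : Prop :=
  (∀ e ∈ F, e.card = 2) ∧ ∀ e ∈ F, ∀ e' ∈ F, e ≠ e' → Disjoint e e'

/-- The "odd" perfect matching of `C_{2n}` (edges `{2i, 2i+1}`, vertices `0,…,2n-1`). -/
def Modd (n : ℕ) : Finset (Finset (ZMod (2 * n))) :=
  Finset.univ.image fun i : Fin n =>
    ({((2 * (i : ℕ) : ℕ) : ZMod (2 * n)), ((2 * (i : ℕ) + 1 : ℕ) : ZMod (2 * n))} :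
      Finset (ZMod (2 * n)))

/-- The "even" perfect matching of `C_{2n}` (edges `{2i+1, 2i+2}`, cyclically). -/
def Meven (n : ℕ) : Finset (Finset (ZMod (2 * n))) :=
  Finset.univ.image fun i : Fin n =>
    ({((2 * (i : ℕ) + 1 : ℕ) : ZMod (2 * n)), ((2 * (i : ℕ) + 2 : ℕ) : ZMod (2 * n))} :
      Finset (ZMod (2 * n)))

/-- The extra matching `M* = {13, 24, 57, 68, …}` of Barát–Gyárfás–Sárközy
(0-indexed: edges `{4j, 4j+2}` and `{4j+1, 4j+3}`). -/
def Mstar (n : ℕ) : Finset (Finset (ZMod (2 * n))) :=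
  (Finset.univ.image fun j : Fin (n / 2) =>
    ({((4 * (j : ℕ) : ℕ) : ZMod (2 * n)), ((4 * (j : ℕ) + 2 : ℕ) : ZMod (2 * n))} :
      Finset (ZMod (2 * n)))) ∪
  (Finset.univ.image fun j : Fin (n / 2) =>
    ({((4 * (j : ℕ) + 1 : ℕ) : ZMod (2 * n)), ((4 * (j : ℕ) + 3 : ℕ) : ZMod (2 * n))} :
      Finset (ZMod (2 * n))))

/-- The family: `n-1` copies of `Modd`, `n-1` copies of `Meven`, one copy of `Mstar`. -/
def BGSfamily (n : ℕ) : Fin (2 * n - 1) → Finset (Finset (ZMod (2 * n))) :=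
  fun i => if (i : ℕ) < n - 1 then Modd n
    else if (i : ℕ) < 2 * n - 2 then Meven n else Mstar n

private lemma bgs_eq_of_modeq {a b m : ℕ} (h : a ≡ b [MOD m]) (h1 : a < b + m)
    (h2 : b < a + m) : a = b := by
  rcases le_total a b with hle | hle
  · have hd := (Nat.modEq_iff_dvd' hle).mp h
    have := Nat.eq_zero_of_dvd_of_lt hd (by omega)
    omega
  · have hd := (Nat.modEq_iff_dvd' hle).mp h.symm
    have := Nat.eq_zero_of_dvd_of_lt hd (by omega)
    omega

private lemma bgs_cast_inj {n : ℕ} {a b : ℕ} (ha : a < 2*n) (hb : b < 2*n)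
    (h : (a : ZMod (2*n)) = b) : a = b := by
  have := (ZMod.natCast_eq_natCast_iff a b (2*n)).mp h
  exact bgs_eq_of_modeq this (by omega) (by omega)

private lemma bgs_cast_mod2 {n : ℕ} {a b : ℕ} (h : (a : ZMod (2*n)) = b) : a % 2 = b % 2 :=
  Nat.ModEq.of_dvd ⟨n, rfl⟩ ((ZMod.natCast_eq_natCast_iff a b (2*n)).mp h)

private lemma bgs_pair_eq {α : Type*} [DecidableEq α] {a b c d : α} :
    ({a, b} : Finset α) = {c, d} ↔ (a = c ∧ b = d) ∨ (a = d ∧ b = c) := by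
  rw [← Finset.coe_inj]
  simp only [Finset.coe_insert, Finset.coe_singleton]
  exact Set.pair_eq_pair_iff

/-- the parity homomorphism -/
private def bgsPar (n : ℕ) : ZMod (2*n) →+* ZMod 2 := ZMod.castHom ⟨n, rfl⟩ (ZMod 2)

private lemma bgs_self_ne_add {n : ℕ} (v : ZMod (2*n)) {k : ℕ} (h0 : 0 < k)
    (hk : k < 2*n) : v + (k : ℕ) ≠ v := by
  intro h
  have h1 : ((k : ℕ) : ZMod (2*n)) = 0 := by
    have := add_eq_left.mp h
    exact this
  have h2 : ((k : ℕ) : ZMod (2*n)) = ((0:ℕ) : ZMod (2*n)) := by simpa using h1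
  have := bgs_cast_inj hk (by omega) h2
  omega

private lemma bgs_mem_modd_iff {n : ℕ} (hn : 2 ≤ n) {e : Finset (ZMod (2*n))} :
    e ∈ Modd n ↔ ∃ v : ZMod (2*n), bgsPar n v = 0 ∧ e = {v, v + 1} := by
  haveI : NeZero (2*n) := ⟨by omega⟩
  constructor
  · intro he
    simp only [Modd, Finset.mem_image, Finset.mem_univ, true_and] at he
    obtain ⟨i, hi⟩ := he
    refine ⟨((2 * (i:ℕ) : ℕ) : ZMod (2*n)), ?_, ?_⟩
    · rw [map_natCast]
      exact (ZMod.natCast_eq_zero_iff _ 2).mpr ⟨(i:ℕ), rfl⟩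
    · rw [← hi]
      congr 1
      push_cast
      ring_nf
  · rintro ⟨v, hv, rfl⟩
    have hval : ((v.val : ℕ) : ZMod (2*n)) = v := ZMod.natCast_rightInverse v
    have hlt : v.val < 2*n := ZMod.val_lt v
    have hdvd : 2 ∣ v.val := by
      rw [← hval, map_natCast] at hv
      exact (ZMod.natCast_eq_zero_iff _ 2).mp hv
    obtain ⟨i, hi⟩ := hdvd
    have hin : i < n := by omega
    simp only [Modd, Finset.mem_image, Finset.mem_univ, true_and]
    refine ⟨⟨i, hin⟩, ?_⟩
    congr 1
    · rw [← hval, hi]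
    · rw [← hval, hi]; push_cast; ring

private lemma bgs_mem_meven_iff {n : ℕ} (hn : 2 ≤ n) {e : Finset (ZMod (2*n))} :
    e ∈ Meven n ↔ ∃ v : ZMod (2*n), bgsPar n v = 1 ∧ e = {v, v + 1} := by
  haveI : NeZero (2*n) := ⟨by omega⟩
  constructor
  · intro he
    simp only [Meven, Finset.mem_image, Finset.mem_univ, true_and] at he
    obtain ⟨i, hi⟩ := he
    refine ⟨((2 * (i:ℕ) + 1 : ℕ) : ZMod (2*n)), ?_, ?_⟩
    · rw [map_natCast]
      have : (2 * (i:ℕ) + 1) % 2 = 1 % 2 := by omega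
      have := (ZMod.natCast_eq_natCast_iff' (2*(i:ℕ)+1) 1 2).mpr this
      simpa using this
    · rw [← hi]
      congr 1
      push_cast
      ring
  · rintro ⟨v, hv, rfl⟩
    have hval : ((v.val : ℕ) : ZMod (2*n)) = v := ZMod.natCast_rightInverse v
    have hlt : v.val < 2*n := ZMod.val_lt v
    have hodd : v.val % 2 = 1 := by
      rw [← hval, map_natCast] at hv
      have := (ZMod.natCast_eq_natCast_iff' (v.val) 1 2).mp (by simpa using hv)
      omega
    obtain ⟨i, hi⟩ : ∃ i, v.val = 2*i + 1 := ⟨v.val / 2, by omega⟩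
    have hin : i < n := by omega
    simp only [Meven, Finset.mem_image, Finset.mem_univ, true_and]
    refine ⟨⟨i, hin⟩, ?_⟩
    congr 1
    · rw [← hval, hi]
    · rw [← hval, hi]; push_cast; ring

private lemma bgs_mem_mstar_iff {n : ℕ} (hn : 2 ≤ n) (heven : Even n)
    {e : Finset (ZMod (2*n))} :
    e ∈ Mstar n ↔ ∃ a : ℕ, a + 2 < 2*n ∧ (a % 4 = 0 ∨ a % 4 = 1) ∧
      e = {(a : ZMod (2*n)), ((a + 2 : ℕ) : ZMod (2*n))} := by
  have h2 : 2 ∣ n := heven.two_dvd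
  constructor
  · intro he
    simp only [Mstar, Finset.mem_union, Finset.mem_image, Finset.mem_univ, true_and] at he
    rcases he with ⟨j, hj⟩ | ⟨j, hj⟩
    · have hjn : (j:ℕ) < n / 2 := j.2
      exact ⟨4 * (j:ℕ), by omega, Or.inl (by omega), hj.symm⟩
    · have hjn : (j:ℕ) < n / 2 := j.2
      refine ⟨4 * (j:ℕ) + 1, by omega, Or.inr (by omega), ?_⟩
      rw [← hj]
  · rintro ⟨a, ha, hmod, rfl⟩
    simp only [Mstar, Finset.mem_union, Finset.mem_image, Finset.mem_univ, true_and]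
    rcases hmod with h4 | h4
    · left
      refine ⟨⟨a / 4, by omega⟩, ?_⟩
      show ({((4*(a/4) : ℕ) : ZMod (2*n)), ((4*(a/4)+2 : ℕ) : ZMod (2*n))} : Finset _) = _
      rw [show 4*(a/4) = a from by omega]
    · right
      refine ⟨⟨a / 4, by omega⟩, ?_⟩
      show ({((4*(a/4)+1 : ℕ) : ZMod (2*n)), ((4*(a/4)+3 : ℕ) : ZMod (2*n))} : Finset _) = _
      rw [show 4*(a/4)+1 = a from by omega, show 4*(a/4)+3 = a+2 from by omega]

private lemma bgs_cast2 {n : ℕ} : ((2:ℕ) : ZMod (2*n)) = 2 := by push_cast; ring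
private lemma bgs_cast1 {n : ℕ} : ((1:ℕ) : ZMod (2*n)) = 1 := by push_cast; ring

private lemma bgs_add_one_ne {n : ℕ} (hn : 2 ≤ n) (v : ZMod (2*n)) : v + 1 ≠ v := by
  have := bgs_self_ne_add (n := n) v (k := 1) (by omega) (by omega)
  rwa [bgs_cast1] at this

private lemma bgs_add_two_ne {n : ℕ} (hn : 2 ≤ n) (v : ZMod (2*n)) : v + 2 ≠ v := by
  have := bgs_self_ne_add (n := n) v (k := 2) (by omega) (by omega)
  rwa [bgs_cast2] at this

/-- no edge is both a cycle edge and a distance-2 edge -/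
private lemma bgs_pair_ne_pair2 {n : ℕ} (hn : 2 ≤ n) (v w : ZMod (2*n)) :
    ({v, v + 1} : Finset (ZMod (2*n))) ≠ {w, w + 2} := by
  intro h
  rcases bgs_pair_eq.mp h with ⟨h1, h2⟩ | ⟨h1, h2⟩
  · -- v = w, v+1 = w+2 → 1 = 2
    subst h1
    have : (1 : ZMod (2*n)) = 2 := by
      have := add_left_cancel h2
      exact this
    have : ((1:ℕ) : ZMod (2*n)) = ((2:ℕ) : ZMod (2*n)) := by
      rw [bgs_cast1, bgs_cast2, this]
    have := bgs_cast_inj (n := n) (by omega) (by omega) this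
    omega
  · -- v = w+2, v+1 = w → v = v+1+2 → 0 = 3
    rw [← h2] at h1
    have h3 : v + ((3:ℕ) : ZMod (2*n)) = v := by
      nth_rewrite 2 [h1]; push_cast; ring
    exact bgs_self_ne_add v (by omega) (by omega) h3

/-- parity of the base vertex of a cycle edge is determined -/
private lemma bgs_base_par {n : ℕ} (hn : 2 ≤ n) {v w : ZMod (2*n)}
    (h : ({v, v + 1} : Finset (ZMod (2*n))) = {w, w + 1}) : v = w := by
  rcases bgs_pair_eq.mp h with ⟨h1, _⟩ | ⟨h1, h2⟩
  · exact h1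
  · exfalso
    rw [← h2] at h1
    have h3 : v + ((2:ℕ) : ZMod (2*n)) = v := by
      nth_rewrite 2 [h1]; push_cast; ring
    exact bgs_self_ne_add v (by omega) (by omega) h3

private lemma bgs_modd_meven_disj {n : ℕ} (hn : 2 ≤ n) {e : Finset (ZMod (2*n))}
    (h1 : e ∈ Modd n) (h2 : e ∈ Meven n) : False := by
  obtain ⟨v, hv, rfl⟩ := (bgs_mem_modd_iff hn).mp h1
  obtain ⟨w, hw, he⟩ := (bgs_mem_meven_iff hn).mp h2
  rw [bgs_base_par hn he] at hv
  rw [hv] at hw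
  exact one_ne_zero hw.symm

private lemma bgs_modd_mstar_disj {n : ℕ} (hn : 2 ≤ n) (heven : Even n)
    {e : Finset (ZMod (2*n))} (h1 : e ∈ Modd n) (h2 : e ∈ Mstar n) : False := by
  obtain ⟨v, _, rfl⟩ := (bgs_mem_modd_iff hn).mp h1
  obtain ⟨a, ha, _, he⟩ := (bgs_mem_mstar_iff hn heven).mp h2
  have : ((a + 2 : ℕ) : ZMod (2*n)) = (a : ZMod (2*n)) + 2 := by push_cast; ring
  rw [this] at he
  exact bgs_pair_ne_pair2 hn v _ he

private lemma bgs_meven_mstar_disj {n : ℕ} (hn : 2 ≤ n) (heven : Even n)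
    {e : Finset (ZMod (2*n))} (h1 : e ∈ Meven n) (h2 : e ∈ Mstar n) : False := by
  obtain ⟨v, _, rfl⟩ := (bgs_mem_meven_iff hn).mp h1
  obtain ⟨a, ha, _, he⟩ := (bgs_mem_mstar_iff hn heven).mp h2
  have : ((a + 2 : ℕ) : ZMod (2*n)) = (a : ZMod (2*n)) + 2 := by push_cast; ring
  rw [this] at he
  exact bgs_pair_ne_pair2 hn v _ he

private lemma bgs_cycle_matching {n : ℕ} (hn : 2 ≤ n) (p : ZMod 2)
    (M : Finset (Finset (ZMod (2*n))))
    (hM : ∀ e ∈ M, ∃ v, bgsPar n v = p ∧ e = {v, v + 1}) : IsMatching M := by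
  constructor
  · intro e he
    obtain ⟨v, _, rfl⟩ := hM e he
    exact Finset.card_pair (fun h => bgs_add_one_ne hn v h.symm)
  · intro e he e' he' hne
    obtain ⟨v, hv, rfl⟩ := hM e he
    obtain ⟨w, hw, rfl⟩ := hM e' he'
    rw [Finset.disjoint_left]
    intro x hx hx'
    simp only [Finset.mem_insert, Finset.mem_singleton] at hx hx'
    have hvw : v ≠ w := fun h => hne (by rw [h])
    -- parity facts
    have hpar : bgsPar n v = bgsPar n w := hv.trans hw.symm
    rcases hx with rfl | rfl <;> rcases hx' with h | h
    · exact hvw h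
    · -- v = w + 1
      rw [h, map_add, map_one] at hpar
      simp at hpar
    · -- v + 1 = w
      rw [← h, map_add, map_one] at hpar
      simp at hpar
    · exact hvw (by exact add_right_cancel h)

private lemma bgs_modd_matching {n : ℕ} (hn : 2 ≤ n) : IsMatching (Modd n) :=
  bgs_cycle_matching hn 0 _ (fun e he => (bgs_mem_modd_iff hn).mp he)

private lemma bgs_meven_matching {n : ℕ} (hn : 2 ≤ n) : IsMatching (Meven n) :=
  bgs_cycle_matching hn 1 _ (fun e he => (bgs_mem_meven_iff hn).mp he)

private lemma bgs_mstar_matching {n : ℕ} (hn : 2 ≤ n) (heven : Even n) :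
    IsMatching (Mstar n) := by
  constructor
  · intro e he
    obtain ⟨a, ha, _, rfl⟩ := (bgs_mem_mstar_iff hn heven).mp he
    refine Finset.card_pair (fun h => ?_)
    have := bgs_cast_inj (n := n) (by omega) (by omega) h
    omega
  · intro e he e' he' hne
    obtain ⟨a, ha, ha4, rfl⟩ := (bgs_mem_mstar_iff hn heven).mp he
    obtain ⟨b, hb, hb4, rfl⟩ := (bgs_mem_mstar_iff hn heven).mp he'
    rw [Finset.disjoint_left]
    intro x hx hx'
    simp only [Finset.mem_insert, Finset.mem_singleton] at hx hx'
    have hab : a ≠ b := fun h => hne (by rw [h])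
    rcases hx with rfl | rfl <;> rcases hx' with h | h <;>
      · have := bgs_cast_inj (n := n) (by omega) (by omega) h
        omega

private lemma bgs_modd_card {n : ℕ} (hn : 2 ≤ n) : (Modd n).card = n := by
  rw [Modd, Finset.card_image_of_injOn, Finset.card_univ, Fintype.card_fin]
  intro i _ j _ hij
  rcases bgs_pair_eq.mp hij with ⟨h1, _⟩ | ⟨h1, _⟩
  · have := bgs_cast_inj (n := n) (by omega) (by omega) h1
    exact Fin.ext (by omega)
  · have := bgs_cast_mod2 (n := n) h1
    omega

private lemma bgs_meven_card {n : ℕ} (hn : 2 ≤ n) : (Meven n).card = n := by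
  rw [Meven, Finset.card_image_of_injOn, Finset.card_univ, Fintype.card_fin]
  intro i _ j _ hij
  rcases bgs_pair_eq.mp hij with ⟨h1, _⟩ | ⟨h1, _⟩
  · have := bgs_cast_inj (n := n) (by omega) (by omega) h1
    exact Fin.ext (by omega)
  · have := bgs_cast_mod2 (n := n) h1
    omega

private lemma bgs_mstar_card {n : ℕ} (hn : 2 ≤ n) (heven : Even n) :
    (Mstar n).card = n := by
  have h2 : 2 ∣ n := heven.two_dvd
  have hd : Disjoint
      (Finset.univ.image fun j : Fin (n / 2) =>
        ({((4 * (j : ℕ) : ℕ) : ZMod (2 * n)), ((4 * (j : ℕ) + 2 : ℕ) : ZMod (2 * n))} :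
          Finset (ZMod (2 * n))))
      (Finset.univ.image fun j : Fin (n / 2) =>
        ({((4 * (j : ℕ) + 1 : ℕ) : ZMod (2 * n)), ((4 * (j : ℕ) + 3 : ℕ) : ZMod (2 * n))} :
          Finset (ZMod (2 * n)))) := by
    rw [Finset.disjoint_left]
    intro e he he'
    simp only [Finset.mem_image, Finset.mem_univ, true_and] at he he'
    obtain ⟨j, hj⟩ := he
    obtain ⟨k, hk⟩ := he'
    rw [← hk] at hj
    rcases bgs_pair_eq.mp hj with ⟨h1, _⟩ | ⟨h1, _⟩ <;>
      · have hjn : (j:ℕ) < n/2 := j.2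
        have hkn : (k:ℕ) < n/2 := k.2
        have := bgs_cast_mod2 (n := n) h1
        omega
  rw [Mstar, Finset.card_union_of_disjoint hd]
  rw [Finset.card_image_of_injOn, Finset.card_image_of_injOn, Finset.card_univ,
    Fintype.card_fin]
  · omega
  · intro i _ j _ hij
    have hin : (i:ℕ) < n/2 := i.2
    have hjn : (j:ℕ) < n/2 := j.2
    rcases bgs_pair_eq.mp hij with ⟨h1, _⟩ | ⟨h1, _⟩ <;>
      · have := bgs_cast_inj (n := n) (by omega) (by omega) h1
        exact Fin.ext (by omega)
  · intro i _ j _ hij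
    have hin : (i:ℕ) < n/2 := i.2
    have hjn : (j:ℕ) < n/2 := j.2
    rcases bgs_pair_eq.mp hij with ⟨h1, _⟩ | ⟨h1, _⟩ <;>
      · have := bgs_cast_inj (n := n) (by omega) (by omega) h1
        exact Fin.ext (by omega)

private lemma bgs_cover {n : ℕ} (hn : 2 ≤ n) {F : Finset (Finset (ZMod (2*n)))}
    (hF : IsMatching F) (hcard : F.card = n) (v : ZMod (2*n)) : ∃ e ∈ F, v ∈ e := by
  haveI : NeZero (2*n) := ⟨by omega⟩
  by_contra h
  push_neg at h
  have h1 : F.biUnion id ⊆ Finset.univ.erase v := by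
    intro x hx
    rw [Finset.mem_biUnion] at hx
    obtain ⟨e, he, hxe⟩ := hx
    exact Finset.mem_erase.mpr ⟨fun hv => h e he (hv ▸ hxe), Finset.mem_univ x⟩
  have h2 : (F.biUnion id).card = 2*n := by
    rw [show (id : Finset (ZMod (2*n)) → Finset (ZMod (2*n))) = fun x => x from rfl, Finset.card_biUnion hF.2]
    rw [Finset.sum_congr rfl hF.1, Finset.sum_const, hcard, smul_eq_mul]
    omega
  have h3 : (Finset.univ.erase v).card = 2*n - 1 := by
    rw [Finset.card_erase_of_mem (Finset.mem_univ v), Finset.card_univ, ZMod.card]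
  have := Finset.card_le_card h1
  omega

private lemma bgs_count {n : ℕ} (hn : 2 ≤ n) {F : Finset (Finset (ZMod (2*n)))}
    {m : ℕ} {c : Finset (ZMod (2*n)) → Fin m}
    (hcard : F.card = n) (hinj : Set.InjOn c ↑F) (S : Finset ℕ) (hS : S.card ≤ n - 1)
    (hc : ∀ e ∈ F, (c e : ℕ) ∈ S) : False := by
  have hinj' : Set.InjOn (fun e => ((c e : ℕ))) ↑F := by
    intro x hx y hy hxy
    exact hinj hx hy (Fin.val_injective hxy)
  have h1 : (F.image fun e => ((c e : ℕ))).card = n := by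
    rw [Finset.card_image_of_injOn hinj', hcard]
  have h2 : (F.image fun e => ((c e : ℕ))) ⊆ S := by
    rw [Finset.image_subset_iff]
    exact hc
  have := Finset.card_le_card h2
  omega


/-- For even `n`, the family of `2n-1` matchings of size `n` consisting of `n-1`
copies of each perfect matching of `C_{2n}` plus `M*` has no rainbow matching of
size `n`. -/
theorem bgs_no_rainbow_matching (n : ℕ) (hn : 2 ≤ n) (heven : Even n) :
    (∀ i, IsMatching (BGSfamily n i) ∧ (BGSfamily n i).card = n) ∧
    ¬ ∃ (F : Finset (Finset (ZMod (2 * n)))) (c : Finset (ZMod (2 * n)) → Fin (2 * n - 1)),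
        IsMatching F ∧ F.card = n ∧ Set.InjOn c ↑F ∧
        ∀ e ∈ F, e ∈ BGSfamily n (c e) := by
  haveI : NeZero (2*n) := ⟨by omega⟩
  constructor
  · intro i
    unfold BGSfamily
    split_ifs with h1 h2
    · exact ⟨bgs_modd_matching hn, bgs_modd_card hn⟩
    · exact ⟨bgs_meven_matching hn, bgs_meven_card hn⟩
    · exact ⟨bgs_mstar_matching hn heven, bgs_mstar_card hn heven⟩
  · rintro ⟨F, c, hF, hcard, hinj, hmem⟩
    have hclass : ∀ e ∈ F, e ∈ Modd n ∨ e ∈ Meven n ∨ e ∈ Mstar n := by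
      intro e he
      have h := hmem e he
      unfold BGSfamily at h
      split_ifs at h with h1 h2
      · exact Or.inl h
      · exact Or.inr (Or.inl h)
      · exact Or.inr (Or.inr h)
    by_cases hstar : ∃ e ∈ F, e ∈ Mstar n
    · obtain ⟨e, heF, hes⟩ := hstar
      obtain ⟨a, ha, _, rfl⟩ := (bgs_mem_mstar_iff hn heven).mp hes
      obtain ⟨f, hfF, hf⟩ := bgs_cover hn hF hcard ((a+1 : ℕ) : ZMod (2*n))
      have hcast2 : ((a + 2 : ℕ) : ZMod (2*n)) = (a : ZMod (2*n)) + 2 := by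
        push_cast; ring
      have hfe : f ≠ {(a : ZMod (2*n)), ((a+2:ℕ) : ZMod (2*n))} := by
        intro h
        rw [h] at hf
        simp only [Finset.mem_insert, Finset.mem_singleton] at hf
        rcases hf with h' | h' <;>
          · have := bgs_cast_inj (n := n) (by omega) (by omega) h'
            omega
      have hdisj := hF.2 f hfF _ heF hfe
      rw [Finset.disjoint_left] at hdisj
      have hcycle : (∃ v, f = {v, v + 1}) ∨ f ∈ Mstar n := by
        rcases hclass f hfF with h | h | h
        · obtain ⟨v, _, hv⟩ := (bgs_mem_modd_iff hn).mp h
          exact Or.inl ⟨v, hv⟩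
        · obtain ⟨v, _, hv⟩ := (bgs_mem_meven_iff hn).mp h
          exact Or.inl ⟨v, hv⟩
        · exact Or.inr h
      rcases hcycle with ⟨v, rfl⟩ | hfs
      · simp only [Finset.mem_insert, Finset.mem_singleton] at hf
        have hcast1 : ((a + 1 : ℕ) : ZMod (2*n)) = (a : ZMod (2*n)) + 1 := by
          push_cast; ring
        rcases hf with h' | h'
        · -- ↑(a+1) = v, so v + 1 = ↑a + 2 is in both f and e
          have hx1 : (a : ZMod (2*n)) + 2 ∈ ({v, v + 1} : Finset (ZMod (2*n))) := by
            simp only [Finset.mem_insert, Finset.mem_singleton]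
            right
            rw [← h', hcast1]
            ring
          have hx2 : (a : ZMod (2*n)) + 2 ∈ ({(a : ZMod (2*n)), ((a+2:ℕ) : ZMod (2*n))} :
              Finset (ZMod (2*n))) := by simp [hcast2]
          exact hdisj hx1 hx2
        · -- ↑(a+1) = v + 1, so v = ↑a is in both
          have hv : v = (a : ZMod (2*n)) := by
            rw [hcast1] at h'
            exact (add_right_cancel h').symm
          have hx1 : (a : ZMod (2*n)) ∈ ({v, v + 1} : Finset (ZMod (2*n))) := by simp [hv]
          have hx2 : (a : ZMod (2*n)) ∈ ({(a : ZMod (2*n)), ((a+2:ℕ) : ZMod (2*n))} :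
              Finset (ZMod (2*n))) := by simp
          exact hdisj hx1 hx2
      · have hcol : ∀ g ∈ F, g ∈ Mstar n → ((c g : ℕ)) = 2*n - 2 := by
          intro g hg hgs
          have h := hmem g hg
          unfold BGSfamily at h
          split_ifs at h with h1 h2
          · exact (bgs_modd_mstar_disj hn heven h hgs).elim
          · exact (bgs_meven_mstar_disj hn heven h hgs).elim
          · have := (c g).2
            omega
        have h1 := hcol _ heF hes
        have h2 := hcol f hfF hfs
        have : c f = c {(a : ZMod (2*n)), ((a+2:ℕ) : ZMod (2*n))} := Fin.ext (by omega)
        exact hfe (hinj hfF heF this)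
    · push_neg at hstar
      have hcyc : ∀ e ∈ F, ∃ v, e = {v, v + 1} := by
        intro e he
        rcases hclass e he with h | h | h
        · obtain ⟨v, _, hv⟩ := (bgs_mem_modd_iff hn).mp h
          exact ⟨v, hv⟩
        · obtain ⟨v, _, hv⟩ := (bgs_mem_meven_iff hn).mp h
          exact ⟨v, hv⟩
        · exact (hstar e he h).elim
      have hQ : ∀ v : ZMod (2*n),
          ({v, v+1} : Finset (ZMod (2*n))) ∈ F ↔ ¬ ({v+1, v+1+1} : Finset (ZMod (2*n))) ∈ F := by
        intro v
        constructor
        · intro h1 h2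
          have hne : ({v, v+1} : Finset (ZMod (2*n))) ≠ {v+1, v+1+1} := by
            intro h
            exact bgs_add_one_ne hn v (bgs_base_par hn h).symm
          have hd := hF.2 _ h1 _ h2 hne
          rw [Finset.disjoint_left] at hd
          have hx1 : v + 1 ∈ ({v, v + 1} : Finset (ZMod (2*n))) := by simp
          have hx2 : v + 1 ∈ ({v + 1, v + 1 + 1} : Finset (ZMod (2*n))) := by simp
          exact hd hx1 hx2
        · intro h2
          obtain ⟨f, hfF, hvf⟩ := bgs_cover hn hF hcard (v+1)
          obtain ⟨w, rfl⟩ := hcyc f hfF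
          simp only [Finset.mem_insert, Finset.mem_singleton] at hvf
          rcases hvf with h | h
          · exact absurd (h ▸ hfF) h2
          · have hw : w = v := (add_right_cancel h).symm
            rw [hw] at hfF
            exact hfF
      have hstep : ∀ (k : ℕ) (v : ZMod (2*n)),
          (({v + (k:ℕ), v + (k:ℕ) + 1} : Finset (ZMod (2*n))) ∈ F) ↔
            (Even k ↔ ({v, v+1} : Finset (ZMod (2*n))) ∈ F) := by
        intro k
        induction k with
        | zero => intro v; simp
        | succ k ih =>
          intro v
          have e1 : (((k+1 : ℕ)) : ZMod (2*n)) = ((k:ℕ) : ZMod (2*n)) + 1 := by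
            push_cast; ring
          rw [e1, ← add_assoc, Nat.even_add_one]
          have h2 := ih v
          have h3 := hQ (v + (k:ℕ))
          tauto
      have hpar : ∀ v w : ZMod (2*n),
          ({v, v+1} : Finset (ZMod (2*n))) ∈ F → ({w, w+1} : Finset (ZMod (2*n))) ∈ F →
          bgsPar n w = bgsPar n v := by
        intro v w hv hw
        have hk : (((w - v).val : ℕ) : ZMod (2*n)) = w - v := ZMod.natCast_rightInverse _
        have hw' : v + (((w - v).val : ℕ) : ZMod (2*n)) = w := by rw [hk]; ring
        have hmem' : ({v + ((w - v).val : ℕ), v + ((w - v).val : ℕ) + 1} :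
            Finset (ZMod (2*n))) ∈ F := by rw [hw']; exact hw
        have hev : Even (w - v).val := ((hstep _ v).mp hmem').mpr hv
        rw [← hw', map_add, map_natCast]
        have hz : (((w - v).val : ℕ) : ZMod 2) = 0 :=
          (ZMod.natCast_eq_zero_iff _ 2).mpr hev.two_dvd
        rw [hz, add_zero]
      have hne : F.Nonempty := by rw [← Finset.card_pos, hcard]; omega
      obtain ⟨e₀, he₀⟩ := hne
      obtain ⟨v₀, rfl⟩ := hcyc e₀ he₀
      rcases (by decide : ∀ p : ZMod 2, p = 0 ∨ p = 1) (bgsPar n v₀) with hp | hp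
      · have hallm : ∀ e ∈ F, e ∈ Modd n := by
          intro e he
          obtain ⟨w, rfl⟩ := hcyc e he
          exact (bgs_mem_modd_iff hn).mpr ⟨w, by rw [hpar v₀ w he₀ he, hp], rfl⟩
        refine bgs_count hn hcard hinj (Finset.range (n-1)) (by simp) ?_
        intro e he
        rw [Finset.mem_range]
        by_contra hcge
        push_neg at hcge
        have h := hmem e he
        unfold BGSfamily at h
        split_ifs at h with h1 h2
        · omega
        · exact bgs_modd_meven_disj hn (hallm e he) h
        · exact bgs_modd_mstar_disj hn heven (hallm e he) h
      · have halle : ∀ e ∈ F, e ∈ Meven n := by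
          intro e he
          obtain ⟨w, rfl⟩ := hcyc e he
          exact (bgs_mem_meven_iff hn).mpr ⟨w, by rw [hpar v₀ w he₀ he, hp], rfl⟩
        refine bgs_count hn hcard hinj (Finset.Ico (n-1) (2*n-2)) (by rw [Nat.card_Ico]; omega) ?_
        intro e he
        rw [Finset.mem_Ico]
        have h := hmem e he
        unfold BGSfamily at h
        split_ifs at h with h1 h2
        · exact (bgs_modd_meven_disj hn h (halle e he)).elim
        · exact ⟨by omega, h2⟩
        · exact (bgs_meven_mstar_disj hn heven (halle e he) h).elim
end

section
/- The family consisting of n−1 copies of each of the two perfect matchings of the cycle C_{2n} is a family of 2n−2 matchings of size n in a bipartite graph with no rainbow matching of size n. Hence the bound 2n−1 in the Aharoni–Berger theorem is best possible. -/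
open Finset

/-- The Drisko family: `n-1` copies of each of the two perfect matchings of `C_{2n}`. -/
def DriskoFamily (n : ℕ) : Fin (2 * n - 2) → Finset (Finset (ZMod (2 * n))) :=
  fun i => if (i : ℕ) < n - 1 then Modd n else Meven n

namespace DriskoAux

variable {n : ℕ}

lemma cast_parity {a b : ℕ} (h : ((a : ℕ) : ZMod (2*n)) = ((b : ℕ) : ZMod (2*n))) :
    a % 2 = b % 2 := by
  rw [ZMod.natCast_eq_natCast_iff] at h
  exact h.of_dvd ⟨n, rfl⟩

lemma cast_small {a b : ℕ} (hn : 2 ≤ n) (hab : a < b) (hd : b - a < 2*n)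
    (h : ((a : ℕ) : ZMod (2*n)) = ((b : ℕ) : ZMod (2*n))) : False := by
  rw [ZMod.natCast_eq_natCast_iff] at h
  have := Nat.le_of_dvd (by omega) ((Nat.modEq_iff_dvd' (by omega)).mp h)
  omega

lemma cast_succ {a b : ℕ} (h : ((a : ℕ) : ZMod (2*n)) = ((b : ℕ) : ZMod (2*n))) :
    ((a + 1 : ℕ) : ZMod (2*n)) = ((b + 1 : ℕ) : ZMod (2*n)) := by
  rw [ZMod.natCast_eq_natCast_iff] at h ⊢
  exact h.add_right 1

lemma cast_pred {a b : ℕ} (h : ((a + 1 : ℕ) : ZMod (2*n)) = ((b + 1 : ℕ) : ZMod (2*n))) :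
    ((a : ℕ) : ZMod (2*n)) = ((b : ℕ) : ZMod (2*n)) := by
  push_cast at h
  exact add_right_cancel h

lemma cast_period (a : ℕ) : ((a + 2*n : ℕ) : ZMod (2*n)) = ((a : ℕ) : ZMod (2*n)) := by
  rw [ZMod.natCast_eq_natCast_iff]
  exact ((Nat.modEq_iff_dvd' (by omega)).mpr ⟨1, by omega⟩).symm

lemma cast_bounded_inj {a b : ℕ} (ha : a < 2*n) (hb : b < 2*n)
    (h : ((a : ℕ) : ZMod (2*n)) = ((b : ℕ) : ZMod (2*n))) : a = b := by
  rw [ZMod.natCast_eq_natCast_iff'] at h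
  rwa [Nat.mod_eq_of_lt ha, Nat.mod_eq_of_lt hb] at h

lemma mem_Modd_iff {e : Finset (ZMod (2*n))} :
    e ∈ Modd n ↔ ∃ j < n,
      e = {((2*j : ℕ) : ZMod (2*n)), ((2*j + 1 : ℕ) : ZMod (2*n))} := by
  constructor
  · intro h
    obtain ⟨i, _, rfl⟩ := Finset.mem_image.mp h
    exact ⟨i, i.2, rfl⟩
  · rintro ⟨j, hj, rfl⟩
    exact Finset.mem_image.mpr ⟨⟨j, hj⟩, Finset.mem_univ _, rfl⟩

lemma mem_Meven_iff {e : Finset (ZMod (2*n))} :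
    e ∈ Meven n ↔ ∃ j < n,
      e = {((2*j + 1 : ℕ) : ZMod (2*n)), ((2*j + 2 : ℕ) : ZMod (2*n))} := by
  constructor
  · intro h
    obtain ⟨i, _, rfl⟩ := Finset.mem_image.mp h
    exact ⟨i, i.2, rfl⟩
  · rintro ⟨j, hj, rfl⟩
    exact Finset.mem_image.mpr ⟨⟨j, hj⟩, Finset.mem_univ _, rfl⟩

lemma isMatching_Modd (hn : 2 ≤ n) : IsMatching (Modd n) := by
  constructor
  · intro e he
    obtain ⟨j, hj, rfl⟩ := mem_Modd_iff.mp he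
    refine Finset.card_pair (fun h => ?_)
    have := cast_parity h
    omega
  · intro e he e' he' hne
    obtain ⟨i, hi, rfl⟩ := mem_Modd_iff.mp he
    obtain ⟨j, hj, rfl⟩ := mem_Modd_iff.mp he'
    rw [Finset.disjoint_left]
    intro a ha ha'
    simp only [Finset.mem_insert, Finset.mem_singleton] at ha ha'
    rcases ha with rfl | rfl <;> rcases ha' with h | h
    · exact hne (by rw [h, cast_succ h])
    · have := cast_parity h; omega
    · have := cast_parity h; omega
    · have h' : ((2*i : ℕ) : ZMod (2*n)) = ((2*j : ℕ) : ZMod (2*n)) := cast_pred h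
      exact hne (by rw [h', cast_succ h'])

lemma isMatching_Meven (hn : 2 ≤ n) : IsMatching (Meven n) := by
  constructor
  · intro e he
    obtain ⟨j, hj, rfl⟩ := mem_Meven_iff.mp he
    refine Finset.card_pair (fun h => ?_)
    have := cast_parity h
    omega
  · intro e he e' he' hne
    obtain ⟨i, hi, rfl⟩ := mem_Meven_iff.mp he
    obtain ⟨j, hj, rfl⟩ := mem_Meven_iff.mp he'
    rw [Finset.disjoint_left]
    intro a ha ha'
    simp only [Finset.mem_insert, Finset.mem_singleton] at ha ha'
    rcases ha with rfl | rfl <;> rcases ha' with h | h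
    · have h2 : ((2*i+1+1 : ℕ) : ZMod (2*n)) = ((2*j+1+1 : ℕ) : ZMod (2*n)) := cast_succ h
      refine hne ?_
      rw [h]
      congr 1
      rw [show 2*i+2 = 2*i+1+1 by omega, show 2*j+2 = 2*j+1+1 by omega]
      simp [h2]
    · have := cast_parity h; omega
    · have := cast_parity h; omega
    · have h' : ((2*i+1 : ℕ) : ZMod (2*n)) = ((2*j+1 : ℕ) : ZMod (2*n)) := by
        have := cast_pred (a := 2*i+1) (b := 2*j+1) (by
          rw [show 2*i+1+1 = 2*i+2 by omega, show 2*j+1+1 = 2*j+2 by omega]; exact h)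
        exact this
      exact hne (by rw [h', h])

lemma card_Modd (hn : 2 ≤ n) : (Modd n).card = n := by
  rw [Modd, Finset.card_image_of_injective _ ?_, Finset.card_univ, Fintype.card_fin]
  intro i j h
  have h' : ({((2*(i:ℕ) : ℕ) : ZMod (2*n)), ((2*(i:ℕ)+1 : ℕ) : ZMod (2*n))} :
      Finset (ZMod (2*n))) =
      {((2*(j:ℕ) : ℕ) : ZMod (2*n)), ((2*(j:ℕ)+1 : ℕ) : ZMod (2*n))} := h
  have hmem : ((2*(i:ℕ) : ℕ) : ZMod (2*n)) ∈
      ({((2*(j:ℕ) : ℕ) : ZMod (2*n)), ((2*(j:ℕ)+1 : ℕ) : ZMod (2*n))} :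
        Finset (ZMod (2*n))) := by
    rw [← h']; exact Finset.mem_insert_self _ _
  simp only [Finset.mem_insert, Finset.mem_singleton] at hmem
  rcases hmem with h' | h'
  · have := cast_bounded_inj (by omega) (by omega) h'
    exact Fin.ext (by omega)
  · have := cast_parity h'; omega

lemma card_Meven (hn : 2 ≤ n) : (Meven n).card = n := by
  rw [Meven, Finset.card_image_of_injective _ ?_, Finset.card_univ, Fintype.card_fin]
  intro i j h
  have h' : ({((2*(i:ℕ)+1 : ℕ) : ZMod (2*n)), ((2*(i:ℕ)+2 : ℕ) : ZMod (2*n))} :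
      Finset (ZMod (2*n))) =
      {((2*(j:ℕ)+1 : ℕ) : ZMod (2*n)), ((2*(j:ℕ)+2 : ℕ) : ZMod (2*n))} := h
  have hmem : ((2*(i:ℕ)+1 : ℕ) : ZMod (2*n)) ∈
      ({((2*(j:ℕ)+1 : ℕ) : ZMod (2*n)), ((2*(j:ℕ)+2 : ℕ) : ZMod (2*n))} :
        Finset (ZMod (2*n))) := by
    rw [← h']; exact Finset.mem_insert_self _ _
  simp only [Finset.mem_insert, Finset.mem_singleton] at hmem
  rcases hmem with h' | h'
  · have := cast_bounded_inj (by omega) (by omega) h'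
    exact Fin.ext (by omega)
  · have := cast_parity h'; omega

lemma not_mem_Modd_and_Meven (hn : 2 ≤ n) {e : Finset (ZMod (2*n))}
    (h1 : e ∈ Modd n) (h2 : e ∈ Meven n) : False := by
  obtain ⟨i, hi, rfl⟩ := mem_Modd_iff.mp h1
  obtain ⟨j, hj, he⟩ := mem_Meven_iff.mp h2
  have hm1 : ((2*i : ℕ) : ZMod (2*n)) ∈
      ({((2*j+1 : ℕ) : ZMod (2*n)), ((2*j+2 : ℕ) : ZMod (2*n))} : Finset (ZMod (2*n))) := by
    rw [← he]; exact Finset.mem_insert_self _ _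
  have hm2 : ((2*i+1 : ℕ) : ZMod (2*n)) ∈
      ({((2*j+1 : ℕ) : ZMod (2*n)), ((2*j+2 : ℕ) : ZMod (2*n))} : Finset (ZMod (2*n))) := by
    rw [← he]; exact Finset.mem_insert.mpr (Or.inr (Finset.mem_singleton_self _))
  simp only [Finset.mem_insert, Finset.mem_singleton] at hm1 hm2
  rcases hm1 with h1' | h1'
  · have := cast_parity h1'; omega
  rcases hm2 with h2' | h2'
  · -- 2i+1 = 2j+1 hence 2i = 2j; but 2i = 2j+2
    have h3 : ((2*i : ℕ) : ZMod (2*n)) = ((2*j : ℕ) : ZMod (2*n)) := by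
      exact cast_pred (a := 2*i) (b := 2*j) (by
        rw [show 2*i+1 = 2*i+1 from rfl]; exact h2')
    have : ((2*j : ℕ) : ZMod (2*n)) = ((2*j+2 : ℕ) : ZMod (2*n)) := by
      rw [← h3]; exact h1'
    exact cast_small hn (by omega) (by omega) this
  · have := cast_parity h2'; omega

lemma cover (hn : 2 ≤ n) (F : Finset (Finset (ZMod (2*n))))
    (hM : IsMatching F) (hcard : F.card = n) (v : ZMod (2*n)) : ∃ e ∈ F, v ∈ e := by
  haveI : NeZero (2*n) := ⟨by omega⟩
  have hb : (F.biUnion (fun x => x)).card = 2*n := by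
    rw [Finset.card_biUnion (fun x hx y hy hxy => hM.2 x hx y hy hxy)]
    have h2 : ∑ u ∈ F, u.card = ∑ _u ∈ F, 2 :=
      Finset.sum_congr rfl (fun e he => hM.1 e he)
    rw [h2, Finset.sum_const, smul_eq_mul, hcard]
    ring
  have huniv : F.biUnion (fun x => x) = Finset.univ :=
    Finset.eq_univ_of_card _ (by rw [hb, ZMod.card])
  have hv : v ∈ F.biUnion (fun x => x) := by rw [huniv]; exact Finset.mem_univ v
  simpa using Finset.mem_biUnion.mp hv

lemma propagate (hn : 2 ≤ n) (F : Finset (Finset (ZMod (2*n))))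
    (hM : IsMatching F) (hcard : F.card = n)
    (hsub : ∀ e ∈ F, e ∈ Modd n ∨ e ∈ Meven n) (i : ℕ)
    (he : ({((2*i+1 : ℕ) : ZMod (2*n)), ((2*i+2 : ℕ) : ZMod (2*n))} :
      Finset (ZMod (2*n))) ∈ F) :
    ({((2*i+3 : ℕ) : ZMod (2*n)), ((2*i+4 : ℕ) : ZMod (2*n))} :
      Finset (ZMod (2*n))) ∈ F := by
  obtain ⟨e', he', hv⟩ := cover hn F hM hcard ((2*i+3 : ℕ) : ZMod (2*n))
  rcases hsub e' he' with hmo | hme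
  · -- e' is an odd edge containing 2i+3 : contradiction with disjointness
    exfalso
    obtain ⟨j, hj, rfl⟩ := mem_Modd_iff.mp hmo
    simp only [Finset.mem_insert, Finset.mem_singleton] at hv
    rcases hv with h1 | h1
    · have := cast_parity h1; omega
    · -- (2i+3) = (2j+1), so (2i+2) = (2j)
      have h2 : ((2*i+2 : ℕ) : ZMod (2*n)) = ((2*j : ℕ) : ZMod (2*n)) :=
        cast_pred (a := 2*i+2) (b := 2*j) (by
          rw [show 2*i+2+1 = 2*i+3 by omega]; exact h1)
      set e : Finset (ZMod (2*n)) :=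
        {((2*i+1 : ℕ) : ZMod (2*n)), ((2*i+2 : ℕ) : ZMod (2*n))} with hedef
      have hne : e ≠ ({((2*j : ℕ) : ZMod (2*n)), ((2*j+1 : ℕ) : ZMod (2*n))} :
          Finset (ZMod (2*n))) := by
        intro hcontra
        have hmem : ((2*j+1 : ℕ) : ZMod (2*n)) ∈ e := by
          rw [hcontra]; exact Finset.mem_insert.mpr (Or.inr (Finset.mem_singleton_self _))
        rw [← h1] at hmem
        simp only [hedef, Finset.mem_insert, Finset.mem_singleton] at hmem
        rcases hmem with h3 | h3
        · exact cast_small hn (a := 2*i+1) (b := 2*i+3) (by omega) (by omega) h3.symm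
        · have := cast_parity h3; omega
      have hdisj := hM.2 e he _ he' hne
      rw [Finset.disjoint_left] at hdisj
      refine hdisj (a := ((2*i+2 : ℕ) : ZMod (2*n))) ?_ ?_
      · exact Finset.mem_insert.mpr (Or.inr (Finset.mem_singleton_self _))
      · rw [h2]; exact Finset.mem_insert_self _ _
  · -- e' is an even edge containing 2i+3, so e' = {2i+3, 2i+4}
    obtain ⟨j, hj, rfl⟩ := mem_Meven_iff.mp hme
    simp only [Finset.mem_insert, Finset.mem_singleton] at hv
    rcases hv with h1 | h1
    · -- (2i+3) = (2j+1)
      have h2 : ((2*j+2 : ℕ) : ZMod (2*n)) = ((2*i+4 : ℕ) : ZMod (2*n)) := by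
        have := cast_succ (a := 2*j+1) (b := 2*i+3) h1.symm
        rw [show 2*j+1+1 = 2*j+2 by omega, show 2*i+3+1 = 2*i+4 by omega] at this
        exact this
      have : ({((2*j+1 : ℕ) : ZMod (2*n)), ((2*j+2 : ℕ) : ZMod (2*n))} :
          Finset (ZMod (2*n))) =
          {((2*i+3 : ℕ) : ZMod (2*n)), ((2*i+4 : ℕ) : ZMod (2*n))} := by
        rw [← h1, h2]
      rwa [this] at he'
    · exfalso; have := cast_parity h1; omega

end DriskoAux

open DriskoAux in
/-- The family of `2n-2` matchings of size `n` consisting of `n-1` copies of each of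
the two perfect matchings of the (bipartite) cycle `C_{2n}` has no rainbow matching
of size `n`; hence `2n-1` in the Aharoni–Berger theorem is best possible. -/
theorem drisko_example_no_rainbow_matching (n : ℕ) (hn : 2 ≤ n) :
    (∀ i, IsMatching (DriskoFamily n i) ∧ (DriskoFamily n i).card = n) ∧
    ¬ ∃ (F : Finset (Finset (ZMod (2 * n)))) (c : Finset (ZMod (2 * n)) → Fin (2 * n - 2)),
        IsMatching F ∧ F.card = n ∧ Set.InjOn c ↑F ∧
        ∀ e ∈ F, e ∈ DriskoFamily n (c e) := by
  constructor
  · intro i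
    unfold DriskoFamily
    split
    · exact ⟨isMatching_Modd hn, card_Modd hn⟩
    · exact ⟨isMatching_Meven hn, card_Meven hn⟩
  · rintro ⟨F, c, hM, hcard, hinj, hcol⟩
    have hsub : ∀ e ∈ F, e ∈ Modd n ∨ e ∈ Meven n := by
      intro e he
      have := hcol e he
      unfold DriskoFamily at this
      split at this
      · exact Or.inl this
      · exact Or.inr this
    by_cases hcase : ∃ e ∈ F, e ∈ Meven n
    · -- F = Meven, so all colors must be ≥ n - 1, but only n - 1 such colors
      obtain ⟨e₀, he₀F, he₀M⟩ := hcase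
      obtain ⟨j, hj, rfl⟩ := mem_Meven_iff.mp he₀M
      -- propagate around the cycle
      have hprop : ∀ k : ℕ, ({((2*(j+k)+1 : ℕ) : ZMod (2*n)), ((2*(j+k)+2 : ℕ) : ZMod (2*n))} :
          Finset (ZMod (2*n))) ∈ F := by
        intro k
        induction k with
        | zero => simpa using he₀F
        | succ m ih =>
          have := propagate hn F hM hcard hsub (j+m) ih
          rw [show 2*(j+m)+3 = 2*(j+(m+1))+1 by omega,
            show 2*(j+m)+4 = 2*(j+(m+1))+2 by omega] at this
          exact this
      have hMeF : Meven n ⊆ F := by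
        intro e he
        obtain ⟨m, hm, rfl⟩ := mem_Meven_iff.mp he
        have hk := hprop (n + m - j)
        have h1 : ((2*(j+(n+m-j))+1 : ℕ) : ZMod (2*n)) = ((2*m+1 : ℕ) : ZMod (2*n)) := by
          rw [show 2*(j+(n+m-j))+1 = (2*m+1) + 2*n by omega]
          exact cast_period _
        have h2 : ((2*(j+(n+m-j))+2 : ℕ) : ZMod (2*n)) = ((2*m+2 : ℕ) : ZMod (2*n)) := by
          rw [show 2*(j+(n+m-j))+2 = (2*m+2) + 2*n by omega]
          exact cast_period _
        rwa [h1, h2] at hk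
      have hFMe : F = Meven n := by
        exact (Finset.eq_of_subset_of_card_le hMeF (by rw [hcard, card_Meven hn])).symm
      -- every color is ≥ n-1
      have hcolors : ∀ e ∈ F, n - 1 ≤ (c e : ℕ) := by
        intro e he
        by_contra hlt
        have := hcol e he
        unfold DriskoFamily at this
        rw [if_pos (by omega)] at this
        refine not_mem_Modd_and_Meven hn this ?_
        rw [hFMe] at he
        exact he
      -- injective map from F into range (n-1)
      have himg : (F.image (fun e => (c e : ℕ) - (n-1))).card = F.card := by
        apply Finset.card_image_of_injOn
        intro a ha b hb hab
        simp only at hab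
        have hca := hcolors a ha
        have hcb := hcolors b hb
        have : (c a : ℕ) = (c b : ℕ) := by omega
        exact hinj ha hb (Fin.val_injective this)
      have hsubr : F.image (fun e => (c e : ℕ) - (n-1)) ⊆ Finset.range (n-1) := by
        intro x hx
        obtain ⟨e, he, rfl⟩ := Finset.mem_image.mp hx
        have h1 := (c e).2
        have h2 := hcolors e he
        rw [Finset.mem_range]
        omega
      have := Finset.card_le_card hsubr
      rw [himg, hcard, Finset.card_range] at this
      omega
    · -- F ⊆ Modd, so all colors must be < n - 1, but only n - 1 such colors
      push_neg at hcase
      have hcolors : ∀ e ∈ F, (c e : ℕ) < n - 1 := by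
        intro e he
        by_contra hge
        have := hcol e he
        unfold DriskoFamily at this
        rw [if_neg (by omega)] at this
        exact hcase e he this
      have himg : (F.image (fun e => (c e : ℕ))).card = F.card := by
        apply Finset.card_image_of_injOn
        intro a ha b hb hab
        simp only at hab
        exact hinj ha hb (Fin.val_injective hab)
      have hsubr : F.image (fun e => (c e : ℕ)) ⊆ Finset.range (n-1) := by
        intro x hx
        obtain ⟨e, he, rfl⟩ := Finset.mem_image.mp hx
        rw [Finset.mem_range]
        exact hcolors e he
      have := Finset.card_le_card hsubr
      rw [himg, hcard, Finset.card_range] at this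
      omega
end

section
/- Let M be a matroid on a finite set V with rank function ρ, presented as a simplicial complex of independent sets, and let X ⊇ M be a d-collapsible simplicial complex on V. Then there exists a face τ ∈ X with ρ(V \ τ) ≤ d. -/
open Finset

/-- A simplicial complex: downward-closed family containing `∅`. -/
def IsComplex {α : Type*} (X : Set (Finset α)) : Prop :=
  ∅ ∈ X ∧ ∀ σ τ : Finset α, σ ⊆ τ → τ ∈ X → σ ∈ X

def IsFacet {α : Type*} (X : Set (Finset α)) (τ : Finset α) : Prop :=
  τ ∈ X ∧ ∀ ρ ∈ X, τ ⊆ ρ → ρ = τ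

def ElemCollapse {α : Type*} (d : ℕ) (X Y : Set (Finset α)) : Prop :=
  ∃ σ ∈ X, σ.card ≤ d ∧ (∃! τ : Finset α, IsFacet X τ ∧ σ ⊆ τ) ∧
    Y = {η | η ∈ X ∧ ¬ σ ⊆ η}

def Collapsible {α : Type*} (d : ℕ) (X : Set (Finset α)) : Prop :=
  Relation.ReflTransGen (ElemCollapse d) X {(∅ : Finset α)}

lemma exists_facet {α : Type*} [Fintype α] [DecidableEq α] (X : Set (Finset α))
    (η : Finset α) (hη : η ∈ X) : ∃ ρ, IsFacet X ρ ∧ η ⊆ ρ := by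
  classical
  obtain ⟨ρ, hρ, hmax⟩ := Finset.exists_max_image
    (Finset.univ.powerset.filter (fun ρ => ρ ∈ X ∧ η ⊆ ρ)) Finset.card
    ⟨η, by simp [hη]⟩
  simp only [Finset.mem_filter, Finset.mem_powerset] at hρ
  refine ⟨ρ, ⟨hρ.2.1, fun ρ' hρ' hsub => ?_⟩, hρ.2.2⟩
  have hc := hmax ρ' (by simp [hρ', hρ.2.2.trans hsub])
  exact (Finset.eq_of_subset_of_card_le hsub hc).symm

/-- Kalai–Meshulam: if a matroid complex `M` (nonempty, downward closed, with the
augmentation property) is contained in a `d`-collapsible complex `X` on the same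
vertex set `V`, then some face `τ ∈ X` satisfies `ρ(V \ τ) ≤ d`, i.e. every
independent set contained in `V \ τ` has size at most `d`. -/
theorem kalai_meshulam {α : Type*} [Fintype α] [DecidableEq α]
    (d : ℕ) (hd : 0 < d) (X M : Set (Finset α))
    (hXcx : IsComplex X) (hMcx : IsComplex M)
    (haug : ∀ σ ∈ M, ∀ τ ∈ M, σ.card < τ.card →
      ∃ v ∈ τ, v ∉ σ ∧ insert v σ ∈ M)
    (hMX : M ⊆ X) (hX : Collapsible d X) :
    ∃ τ ∈ X, ∀ σ ∈ M, σ ⊆ Finset.univ \ τ → σ.card ≤ d := by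
  classical
  clear hd
  revert hXcx hMX
  induction hX using Relation.ReflTransGen.head_induction_on with
  | refl =>
    intro _ hMX
    refine ⟨∅, rfl, fun σ hσ _ => ?_⟩
    have hσ0 : σ = ∅ := hMX hσ
    simp [hσ0]
  | @head A C h' _ ih =>
    intro hXcx hMX
    obtain ⟨σ, hσX, hσd, ⟨τ₀, ⟨hτ₀facet, hστ₀⟩, hτ₀uniq⟩, hYeq⟩ := h'
    subst hYeq
    by_cases hcase : ∃ μ ∈ M, σ ⊆ μ
    · obtain ⟨μ, hμM, hσμ⟩ := hcase
      have hσM : σ ∈ M := hMcx.2 σ μ hσμ hμM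
      have hsub : ∀ η ∈ A, σ ⊆ η → η ⊆ τ₀ := by
        intro η hη hση
        obtain ⟨ρ, hρfacet, hηρ⟩ := exists_facet _ η hη
        have hρτ : ρ = τ₀ := hτ₀uniq ρ ⟨hρfacet, hση.trans hηρ⟩
        exact hρτ ▸ hηρ
      refine ⟨τ₀, hτ₀facet.1, fun σ' hσ' hσ'sub => ?_⟩
      by_contra hlt
      push_neg at hlt
      obtain ⟨v, hvσ', hvσ, hins⟩ := haug σ hσM σ' hσ' (lt_of_le_of_lt hσd hlt)
      have hvτ₀ : v ∈ τ₀ :=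
        hsub _ (hMX hins) (Finset.subset_insert v σ) (Finset.mem_insert_self v σ)
      have hv2 := hσ'sub hvσ'
      simp only [Finset.mem_sdiff] at hv2
      exact hv2.2 hvτ₀
    · push_neg at hcase
      have hYcx : IsComplex {η | η ∈ A ∧ ¬ σ ⊆ η} :=
        ⟨⟨hXcx.1, hcase ∅ hMcx.1⟩,
         fun a b hab hb => ⟨hXcx.2 a b hab hb.1, fun h => hb.2 (h.trans hab)⟩⟩
      have hMY : M ⊆ {η | η ∈ A ∧ ¬ σ ⊆ η} :=
        fun η hη => ⟨hMX hη, hcase η hη⟩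
      obtain ⟨τ, hτ, hτprop⟩ := ih hYcx hMY
      exact ⟨τ, hτ.1, hτprop⟩
end

section
/- For every edge set E' of a graph, the fractional matching number ν*(E') is either an integer or a half-integer (i.e., 2·ν*(E') ∈ ℤ). -/
open Finset

/-!
Read a fractional matching `f` as the symmetric matrix `A u v = f {u, v}`, i.e. as a fractional
matching of the bipartite double cover. Its row sums are the vertex loads, so padding the diagonal
with the slack `1 - ∑ v, A u v` makes it doubly stochastic, and its mass on ordered pairs of
endpoints of edges is `2 ∑ f`. By Birkhoff's theorem it is a convex combination of permutation
matrices, so some permutation `σ` puts at least that much mass on edges. Conversely every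
permutation matrix, halved and symmetrised, is a fractional matching whose value is half the
(integral) number of arcs `u ↦ σ u` along edges. For optimal `f` both inequalities are
equalities, so `2 ν*` is that number.
-/

open Matrix

def edgeMass {V : Type*} (E : Finset (Finset V)) : Matrix V V ℝ →ₗ[ℝ] ℝ :=
  ∑ e ∈ E, ∑ p ∈ e.offDiag, entryLinearMap ℝ ℝ p.1 p.2

lemma edgeMass_apply {V : Type*} {E : Finset (Finset V)} (M : Matrix V V ℝ) :
    edgeMass E M = ∑ e ∈ E, ∑ p ∈ e.offDiag, M p.1 p.2 := by
  simp [edgeMass, LinearMap.sum_apply]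

section

variable {V : Type*} [DecidableEq V] {E : Finset (Finset V)} {f : Finset V → ℝ}

lemma eq_pair_of_mem_offDiag {e : Finset V} {p : V × V} (he : e.card = 2)
    (hp : p ∈ e.offDiag) : e = {p.1, p.2} := by
  obtain ⟨h1, h2, hne⟩ := mem_offDiag.mp hp
  refine (eq_of_subset_of_card_le (insert_subset h1 (singleton_subset_iff.mpr h2)) ?_).symm
  rw [he, card_pair hne]

lemma pairwiseDisjoint_offDiag (hE : ∀ e ∈ E, e.card = 2) :
    (E : Set (Finset V)).PairwiseDisjoint offDiag := by
  intro e he e' he' hne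
  refine disjoint_left.mpr fun p hp hp' => hne ?_
  rw [eq_pair_of_mem_offDiag (hE e he) hp, eq_pair_of_mem_offDiag (hE e' he') hp']

lemma exists_intCast_edgeMass_permMatrix (σ : Equiv.Perm V) :
    ∃ m : ℤ, edgeMass E (σ.permMatrix ℝ) = m :=
  ⟨∑ e ∈ E, ∑ p ∈ e.offDiag, σ.permMatrix ℤ p.1 p.2, by
    simp [edgeMass_apply, PEquiv.toMatrix_apply]⟩

variable (E) in
noncomputable def matrixEdgeWeight (M : Matrix V V ℝ) (e : Finset V) : ℝ :=
  if e ∈ E then (∑ p ∈ e.offDiag, M p.1 p.2) / 2 else 0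

lemma sum_matrixEdgeWeight (M : Matrix V V ℝ) :
    ∑ e ∈ E, matrixEdgeWeight E M e = edgeMass E M / 2 := by
  rw [edgeMass_apply, sum_div]
  exact sum_congr rfl fun e he => if_pos he

variable (E f) in
def weightMatrix : Matrix V V ℝ :=
  of fun u v => ∑ e ∈ E, if (u, v) ∈ e.offDiag then f e else 0

lemma weightMatrix_comm (u v : V) : weightMatrix E f u v = weightMatrix E f v u := by
  simp only [weightMatrix, of_apply, mem_offDiag, ne_comm, and_left_comm]

lemma weightMatrix_self (u : V) : weightMatrix E f u u = 0 := by
  simp [weightMatrix, mem_offDiag]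

lemma weightMatrix_nonneg (hf : ∀ e, 0 ≤ f e) (u v : V) : 0 ≤ weightMatrix E f u v :=
  sum_nonneg fun e _ => by split_ifs; exacts [hf e, le_rfl]

lemma weightMatrix_of_mem_offDiag (hE : ∀ e ∈ E, e.card = 2) {e : Finset V} (he : e ∈ E)
    {p : V × V} (hp : p ∈ e.offDiag) : weightMatrix E f p.1 p.2 = f e := by
  rw [weightMatrix, of_apply, sum_eq_single_of_mem e he, if_pos hp]
  exact fun e' he' hne => if_neg fun hp' =>
    disjoint_left.mp (pairwiseDisjoint_offDiag hE he' he hne) hp' hp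

variable [Fintype V]

lemma sum_sum_offDiag_le (hE : ∀ e ∈ E, e.card = 2) {F : V × V → ℝ}
    (hF : ∀ p, 0 ≤ F p) :
    ∑ e ∈ E, ∑ p ∈ e.offDiag, F p ≤ ∑ p, F p := by
  rw [← sum_biUnion (pairwiseDisjoint_offDiag hE)]
  exact sum_le_univ_sum_of_nonneg hF

lemma exists_perm_edgeMass_ge {M : Matrix V V ℝ} (hM : M ∈ doublyStochastic ℝ V) :
    ∃ σ : Equiv.Perm V, edgeMass E M ≤ edgeMass E (σ.permMatrix ℝ) := by
  rw [← SetLike.mem_coe, doublyStochastic_eq_convexHull_permMatrix] at hM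
  obtain ⟨_, ⟨σ, rfl⟩, hσ⟩ :=
    ((edgeMass E).convexOn convex_univ).exists_ge_of_mem_convexHull (Set.subset_univ _) hM
  exact ⟨σ, hσ⟩

lemma fracMatching_matrixEdgeWeight (hE : ∀ e ∈ E, e.card = 2) {M : Matrix V V ℝ}
    (hM : M ∈ doublyStochastic ℝ V) : FracMatching E (matrixEdgeWeight E M) := by
  have hM0 : ∀ p : V × V, 0 ≤ M p.1 p.2 := fun p => nonneg_of_mem_doublyStochastic hM
  refine ⟨fun e => ?_, fun e he => if_neg he, fun w => ?_⟩
  · unfold matrixEdgeWeight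
    split_ifs
    exacts [div_nonneg (sum_nonneg fun p _ => hM0 p) zero_le_two, le_rfl]
  -- the load at `w` is at most half the mass of row `w` plus column `w`
  set F : V × V → ℝ := fun p =>
    ((if p.1 = w then M p.1 p.2 else 0) + (if p.2 = w then M p.1 p.2 else 0)) / 2
  have hF : ∀ p, 0 ≤ F p := fun p => by
    simp only [F]; split_ifs <;> linarith [hM0 p]
  have hsumF : ∑ p, F p = 1 := by
    simp [F, Fintype.sum_prod_type, sum_add_distrib, ← sum_div,
      sum_row_of_mem_doublyStochastic hM, sum_col_of_mem_doublyStochastic hM]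
  calc ∑ e ∈ E, (if w ∈ e then matrixEdgeWeight E M e else 0)
      ≤ ∑ e ∈ E, ∑ p ∈ e.offDiag, F p := by
        refine sum_le_sum fun e he => ?_
        split_ifs with hw
        · rw [matrixEdgeWeight, if_pos he, sum_div]
          refine sum_le_sum fun p hp => ?_
          rw [eq_pair_of_mem_offDiag (hE e he) hp, mem_insert, mem_singleton] at hw
          rcases hw with rfl | rfl <;> simp only [F, ↓reduceIte] <;> split_ifs <;>
            linarith [hM0 p]
        · exact sum_nonneg fun p _ => hF p
    _ ≤ ∑ p, F p := sum_sum_offDiag_le hE hF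
    _ = 1 := hsumF

lemma sum_ite_mem_offDiag {e : Finset V} (he : e.card = 2) (u : V) (c : ℝ) :
    ∑ v, (if (u, v) ∈ e.offDiag then c else 0) = if u ∈ e then c else 0 := by
  by_cases hu : u ∈ e
  · have hmem : ∀ v, (u, v) ∈ e.offDiag ↔ v ∈ e.erase u := fun v => by
      simp [mem_offDiag, hu, and_comm, ne_comm]
    simp_rw [hmem, sum_ite_mem, univ_inter, sum_const, card_erase_of_mem hu, he, if_pos hu]
    simp
  · simp [mem_offDiag, hu]

lemma sum_weightMatrix_row (hE : ∀ e ∈ E, e.card = 2) (u : V) :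
    ∑ v, weightMatrix E f u v = ∑ e ∈ E, if u ∈ e then f e else 0 := by
  simp only [weightMatrix, of_apply]
  rw [sum_comm]
  exact sum_congr rfl fun e he => sum_ite_mem_offDiag (hE e he) u (f e)

variable (E f) in
def stochasticCompletion : Matrix V V ℝ :=
  weightMatrix E f + diagonal fun u => 1 - ∑ v, weightMatrix E f u v

lemma stochasticCompletion_mem_doublyStochastic (hE : ∀ e ∈ E, e.card = 2)
    (hf : FracMatching E f) : stochasticCompletion E f ∈ doublyStochastic ℝ V := by
  refine mem_doublyStochastic_iff_sum.mpr ⟨fun u v => ?_, fun u => ?_, fun v => ?_⟩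
  · rcases eq_or_ne u v with rfl | huv
    · rw [stochasticCompletion, Matrix.add_apply, diagonal_apply_eq, weightMatrix_self,
        zero_add, sub_nonneg, sum_weightMatrix_row hE]
      exact hf.2.2 u
    · rw [stochasticCompletion, Matrix.add_apply, diagonal_apply_ne _ huv, add_zero]
      exact weightMatrix_nonneg hf.1 u v
  · simp [stochasticCompletion, sum_add_distrib, diagonal_apply]
  · simp [stochasticCompletion, sum_add_distrib, diagonal_apply, weightMatrix_comm _ v]

lemma edgeMass_stochasticCompletion (hE : ∀ e ∈ E, e.card = 2) :
    edgeMass E (stochasticCompletion E f) = 2 * ∑ e ∈ E, f e := by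
  rw [edgeMass_apply, mul_sum]
  refine sum_congr rfl fun e he => ?_
  have hcard : e.offDiag.card = 2 := by rw [offDiag_card, hE e he]
  calc ∑ p ∈ e.offDiag, stochasticCompletion E f p.1 p.2
      = ∑ p ∈ e.offDiag, f e := sum_congr rfl fun p hp => by
        rw [stochasticCompletion, Matrix.add_apply, diagonal_apply_ne _ (mem_offDiag.mp hp).2.2,
          add_zero, weightMatrix_of_mem_offDiag hE he hp]
    _ = 2 * f e := by rw [sum_const, hcard, nsmul_eq_mul, Nat.cast_ofNat]

end

/-- For every edge set `E'` of a graph, the fractional matching number `ν*(E')` is an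
integer or half-integer: `2·ν*(E') ∈ ℤ`. -/
theorem fracMatchingNumber_halfIntegral {V : Type*} [Fintype V] [DecidableEq V]
    (E' : Finset (Finset V)) (hE : ∀ e ∈ E', e.card = 2) (ν : ℝ)
    (hν : IsGreatest {x : ℝ | ∃ f, FracMatching E' f ∧ ∑ e ∈ E', f e = x} ν) :
    ∃ m : ℤ, 2 * ν = (m : ℝ) := by
  obtain ⟨f, hf, rfl⟩ := hν.1
  obtain ⟨σ, hσ⟩ :=
    exists_perm_edgeMass_ge (E := E') (stochasticCompletion_mem_doublyStochastic hE hf)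
  obtain ⟨m, hm⟩ := exists_intCast_edgeMass_permMatrix (E := E') σ
  have hopt : edgeMass E' (σ.permMatrix ℝ) / 2 ≤ ∑ e ∈ E', f e :=
    hν.2 ⟨_, fracMatching_matrixEdgeWeight hE permMatrix_mem_doublyStochastic,
      sum_matrixEdgeWeight _⟩
  rw [edgeMass_stochasticCompletion hE] at hσ
  exact ⟨m, by linarith⟩
end
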